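/- arXiv:1505.04985 — 7 statements merged into one kernel-verified Lean document; each statement's English description precedes it below -/
import Mathlib

section
/- The equation D1: τ(τx + y) ≈ τx + y is derivable from axioms A1–4 (commutativity, associativity, idempotence of +, and 0 as unit) together with WIF1: α(τx + τy) ≈ αx + αy and WIF2: τx + y ≈ τx + τ(x + y), using the rules of equational logic over BCCS terms. -/
/-- BCCS terms over concrete actions `A` (with `none` playing the role of the
hidden action τ) and variables `V`. -/
inductive Tm (A V : Type) : Type
  | nil : Tm A V
  | var : V → Tm A V
  | plus : Tm A V → Tm A V → Tm A V
  | pre : Option A → Tm A V → Tm A V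

namespace Tm

variable {A V : Type}

/-- The operational semantics of BCCS. -/
inductive Step : Tm A V → Option A → Tm A V → Prop
  | pre (α : Option A) (t : Tm A V) : Step (.pre α t) α t
  | plusL {t : Tm A V} {α : Option A} {t' : Tm A V} (u : Tm A V) :
      Step t α t' → Step (.plus t u) α t'
  | plusR (t : Tm A V) {u : Tm A V} {α : Option A} {u' : Tm A V} :
      Step u α u' → Step (.plus t u) α u'

/-- `⇒` : the reflexive-transitive closure of τ-steps. -/
def WTau : Tm A V → Tm A V → Prop := Relation.ReflTransGen (fun t u => Step t none u)

/-- Strong (concrete) traces leading to a state. -/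
inductive TraceTo : Tm A V → List A → Tm A V → Prop
  | refl (t : Tm A V) : TraceTo t [] t
  | act {t : Tm A V} {a : A} {t' : Tm A V} {w : List A} {u : Tm A V} :
      Step t (some a) t' → TraceTo t' w u → TraceTo t (a :: w) u

/-- Weak traces leading to a state (τ-steps are skipped). -/
inductive WTraceTo : Tm A V → List A → Tm A V → Prop
  | refl (t : Tm A V) : WTraceTo t [] t
  | tau {t t' : Tm A V} {w : List A} {u : Tm A V} :
      Step t none t' → WTraceTo t' w u → WTraceTo t w u
  | act {t : Tm A V} {a : A} {t' : Tm A V} {w : List A} {u : Tm A V} :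
      Step t (some a) t' → WTraceTo t' w u → WTraceTo t (a :: w) u

/-- The set of (strong) traces of a term. -/
def T (t : Tm A V) : Set (List A) := {w | ∃ t', TraceTo t w t'}

/-- The set of weak traces of a term. -/
def WT (t : Tm A V) : Set (List A) := {w | ∃ t', WTraceTo t w t'}

/-- `(w, B)` is an impossible future of `t`. -/
def ImpFut (t : Tm A V) (w : List A) (B : Set (List A)) : Prop :=
  ∃ t', TraceTo t w t' ∧ ∀ s ∈ T t', s ∉ B

/-- `(w, B)` is a weak impossible future of `t`. -/
def WImpFut (t : Tm A V) (w : List A) (B : Set (List A)) : Prop :=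
  ∃ t', WTraceTo t w t' ∧ ∀ s ∈ WT t', s ∉ B

/-- The (concrete) impossible futures preorder. -/
def IFle (p q : Tm A V) : Prop := ∀ w B, ImpFut p w B → ImpFut q w B

/-- (Concrete) impossible futures equivalence. -/
def IFeq (p q : Tm A V) : Prop := IFle p q ∧ IFle q p

/-- The weak impossible futures preorder. -/
def WIFle (p q : Tm A V) : Prop :=
  (∀ w B, WImpFut p w B → WImpFut q w B) ∧ (WT p = WT q) ∧
  ((∃ p', Step p none p') → ∃ q', Step q none q')

/-- Weak impossible futures equivalence. -/
def WIFeq (p q : Tm A V) : Prop := WIFle p q ∧ WIFle q p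

/-- The variables occurring in a term. -/
def vars : Tm A V → Set V
  | nil => ∅
  | var x => {x}
  | plus t u => vars t ∪ vars u
  | pre _ t => vars t

/-- A term is closed if it contains no variables. -/
def Closed (t : Tm A V) : Prop := vars t = ∅

/-- Substitution. -/
def subst (σ : V → Tm A V) : Tm A V → Tm A V
  | nil => nil
  | var x => σ x
  | plus t u => plus (subst σ t) (subst σ u)
  | pre α t => pre α (subst σ t)

/-- A closed substitution. -/
def ClosedSub (σ : V → Tm A V) : Prop := ∀ x, Closed (σ x)

/-- A BCCSP term: one containing no occurrence of the τ prefix. -/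
def NoTau : Tm A V → Prop
  | nil => True
  | var _ => True
  | plus t u => NoTau t ∧ NoTau u
  | pre none _ => False
  | pre (some _) t => NoTau t

/-- The variables occurring initially (outside all prefixes). -/
def initVars : Tm A V → Set V
  | nil => ∅
  | var x => {x}
  | plus t u => initVars t ∪ initVars u
  | pre _ _ => ∅

/-- The variables having a non-initial occurrence (under some prefix). -/
def deepVars : Tm A V → Set V
  | nil => ∅
  | var _ => ∅
  | plus t u => deepVars t ∪ deepVars u
  | pre _ t => vars t

/-- A term is safe if no variable occurs both initially and non-initially. -/
def Safe (t : Tm A V) : Prop := initVars t ∩ deepVars t = ∅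

/-- `init-τ` : rename all initial prefixes into τ. -/
def initTau : Tm A V → Tm A V
  | nil => nil
  | var x => var x
  | plus t u => plus (initTau t) (initTau u)
  | pre _ t => pre none t

/-- The weak depth of a term (τ-prefixes are not counted). -/
def wdepth : Tm A V → ℕ
  | nil => 0
  | var _ => 0
  | plus t u => max (wdepth t) (wdepth u)
  | pre none t => wdepth t
  | pre (some _) t => wdepth t + 1

/-- `n`-fold prefixing with the action `a`. -/
def npre (a : A) : ℕ → Tm A V → Tm A V
  | 0, t => t
  | n + 1, t => pre (some a) (npre a n t)

/-- Finite sums of terms. -/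
def listSum : List (Tm A V) → Tm A V
  | [] => nil
  | t :: l => plus t (listSum l)

/-- Weak traces ending in a variable: `(w, x) ∈ WTV t` iff `t` can weakly perform
`w` and reach a term in which `x` occurs initially. -/
def WTV (t : Tm A V) : Set (List A × V) :=
  {wx | ∃ t', WTraceTo t wx.1 t' ∧ wx.2 ∈ initVars t'}

/-- The axioms A1-4 + WIF1 + WIF2 (as schemas, i.e. closed under instantiation). -/
inductive AX : Tm A V → Tm A V → Prop
  | A1 (t u : Tm A V) : AX (.plus t u) (.plus u t)
  | A2 (t u v : Tm A V) : AX (.plus (.plus t u) v) (.plus t (.plus u v))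
  | A3 (t : Tm A V) : AX (.plus t t) t
  | A4 (t : Tm A V) : AX (.plus t .nil) t
  | WIF1 (α : Option A) (t u : Tm A V) :
      AX (.pre α (.plus (.pre none t) (.pre none u))) (.plus (.pre α t) (.pre α u))
  | WIF2 (t u : Tm A V) :
      AX (.plus (.pre none t) u) (.plus (.pre none t) (.pre none (.plus t u)))

/-- Equational derivability from an axiomatization `E`. -/
inductive Deriv (E : Tm A V → Tm A V → Prop) : Tm A V → Tm A V → Prop
  | ax {t u : Tm A V} : E t u → Deriv E t u
  | inst {t u : Tm A V} (σ : V → Tm A V) : E t u → Deriv E (subst σ t) (subst σ u)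
  | refl (t : Tm A V) : Deriv E t t
  | symm {t u : Tm A V} : Deriv E t u → Deriv E u t
  | trans {t u v : Tm A V} : Deriv E t u → Deriv E u v → Deriv E t v
  | pre (α : Option A) {t u : Tm A V} : Deriv E t u → Deriv E (.pre α t) (.pre α u)
  | plus {t u t' u' : Tm A V} :
      Deriv E t t' → Deriv E u u' → Deriv E (.plus t u) (.plus t' u')

/-- Inequational derivability from an axiomatization `E` (no symmetry). -/
inductive IDeriv (E : Tm A V → Tm A V → Prop) : Tm A V → Tm A V → Prop
  | ax {t u : Tm A V} : E t u → IDeriv E t u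
  | inst {t u : Tm A V} (σ : V → Tm A V) : E t u → IDeriv E (subst σ t) (subst σ u)
  | refl (t : Tm A V) : IDeriv E t t
  | trans {t u v : Tm A V} : IDeriv E t u → IDeriv E u v → IDeriv E t v
  | pre (α : Option A) {t u : Tm A V} : IDeriv E t u → IDeriv E (.pre α t) (.pre α u)
  | plus {t u t' u' : Tm A V} :
      IDeriv E t t' → IDeriv E u u' → IDeriv E (.plus t u) (.plus t' u')

end Tm

/-- D1 `τ(τx + y) ≈ τx + y` is derivable from A1-4 + WIF1 + WIF2. -/
theorem stmt0 {A V : Type} (t u : Tm A V) :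
    Tm.Deriv Tm.AX
      (.pre none (.plus (.pre none t) u))
      (.plus (.pre none t) u) := by

  -- τ(τt+u) ≈ τ(τt+τ(t+u))   [WIF2 under τ-prefix]
  -- ≈ τt + τ(t+u)            [WIF1 with α = τ]
  -- ≈ τt + u                 [WIF2 backwards]
  exact .trans (.pre none (.ax (.WIF2 t u)))
    (.trans (.ax (.WIF1 none t (.plus t u))) (.symm (.ax (.WIF2 t u))))
end

section
/- Every BCCS term t with a τ-transition (having a summand τt') can be proved equal, from A1–4 + WIF1 + WIF2, to a term of the form Σ_{i∈I} τt_i where I is nonempty and each t_i is a BCCSP term (containing no τ prefix). -/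
/-!
By structural induction, a term without an initial τ-step is provably a BCCSP term, and
any other term is provably a nonempty sum `Σ τ sᵢ` of τ-prefixed BCCSP terms. Three derived
laws do the work: WIF2 lets a τ-summand absorb any summand next to it
(`τs + u ≈ τs + τ(s + u)`), a τ-sum under τ is absorbed (`τ(τx + y) ≈ τx + y`), and a
visible action distributes over the τ-summands beneath it, removing them
(`a(τx + y) ≈ ax + a(x + y)`).
-/

namespace Tm

variable {A V : Type}

def tauSum (l : List (Tm A V)) : Tm A V := listSum (l.map (pre none))

def HasNoTauForm (t : Tm A V) : Prop := ∃ n, NoTau n ∧ Deriv AX t n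

def HasTauSumForm (t : Tm A V) : Prop :=
  ∃ l : List (Tm A V), l ≠ [] ∧ (∀ s ∈ l, NoTau s) ∧ Deriv AX t (tauSum l)

lemma deriv_listSum_append : ∀ l₁ l₂ : List (Tm A V),
    Deriv AX (plus (listSum l₁) (listSum l₂)) (listSum (l₁ ++ l₂))
  | [], _ => .trans (.ax (.A1 _ _)) (.ax (.A4 _))
  | t :: l₁, l₂ => .trans (.ax (.A2 t _ _)) (.plus (.refl t) (deriv_listSum_append l₁ l₂))

lemma deriv_tauSum_append (l₁ l₂ : List (Tm A V)) :
    Deriv AX (plus (tauSum l₁) (tauSum l₂)) (tauSum (l₁ ++ l₂)) := by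
  simpa only [tauSum, List.map_append] using deriv_listSum_append _ _

lemma deriv_tau_tau_plus (x y : Tm A V) :
    Deriv AX (pre none (plus (pre none x) y)) (plus (pre none x) y) :=
  .trans (.pre none (.ax (.WIF2 x y)))
    (.trans (.ax (.WIF1 none x (plus x y))) (.symm (.ax (.WIF2 x y))))

lemma deriv_pre_tau_plus (α : Option A) (x y : Tm A V) :
    Deriv AX (pre α (plus (pre none x) y)) (plus (pre α x) (pre α (plus x y))) :=
  .trans (.pre α (.ax (.WIF2 x y))) (.ax (.WIF1 α x (plus x y)))

lemma deriv_tauSum_cons_plus (s u : Tm A V) (l : List (Tm A V)) :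
    Deriv AX (plus (tauSum (s :: l)) u) (tauSum (s :: plus s u :: l)) :=
  .trans (.ax (.A2 _ _ _)) <| .trans (.plus (.refl _) (.ax (.A1 _ _))) <|
    .trans (.symm (.ax (.A2 _ _ _))) <| .trans (.plus (.ax (.WIF2 s u)) (.refl _)) <|
      .ax (.A2 _ _ _)

lemma exists_noTau_deriv_pre_plus_tauSum (a : A) :
    ∀ (l : List (Tm A V)) (o : Tm A V), (∀ s ∈ l, NoTau s) → NoTau o →
      ∃ n, NoTau n ∧ Deriv AX (pre (some a) (plus (tauSum l) o)) n
  | [], o, _, ho =>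
      ⟨pre (some a) o, ho, .pre _ (.trans (.ax (.A1 _ _)) (.ax (.A4 o)))⟩
  | s :: l, o, hsl, ho => by
      obtain ⟨hs, hl⟩ := List.forall_mem_cons.1 hsl
      obtain ⟨n, hn, hd⟩ := exists_noTau_deriv_pre_plus_tauSum a l (plus s o) hl ⟨hs, ho⟩
      have hrearrange : Deriv AX (plus s (plus (tauSum l) o)) (plus (tauSum l) (plus s o)) :=
        .trans (.symm (.ax (.A2 _ _ _))) <|
          .trans (.plus (.ax (.A1 _ _)) (.refl _)) (.ax (.A2 _ _ _))
      refine ⟨plus (pre (some a) s) n, ⟨hs, hn⟩, ?_⟩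
      exact .trans (.pre _ (.ax (.A2 _ _ _))) <| .trans (deriv_pre_tau_plus _ s _) <|
        .plus (.refl _) (.trans (.pre _ hrearrange) hd)

lemma HasTauSumForm.of_deriv {t u : Tm A V} (h : Deriv AX t u) :
    HasTauSumForm u → HasTauSumForm t
  | ⟨l, hne, hl, hd⟩ => ⟨l, hne, hl, .trans h hd⟩

lemma HasNoTauForm.plus {u v : Tm A V} :
    HasNoTauForm u → HasNoTauForm v → HasNoTauForm (Tm.plus u v)
  | ⟨n, hn, hu⟩, ⟨m, hm, hv⟩ => ⟨Tm.plus n m, ⟨hn, hm⟩, .plus hu hv⟩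

lemma HasTauSumForm.plus {u v : Tm A V} :
    HasTauSumForm u → HasTauSumForm v → HasTauSumForm (Tm.plus u v)
  | ⟨l₁, hne, hl₁, hu⟩, ⟨l₂, _, hl₂, hv⟩ =>
      ⟨l₁ ++ l₂, List.append_ne_nil_of_left_ne_nil hne _,
        List.forall_mem_append.2 ⟨hl₁, hl₂⟩,
        .trans (.plus hu hv) (deriv_tauSum_append l₁ l₂)⟩

lemma HasTauSumForm.plus_hasNoTauForm {u v : Tm A V} :
    HasTauSumForm u → HasNoTauForm v → HasTauSumForm (Tm.plus u v)
  | ⟨[], hne, _, _⟩, _ => absurd rfl hne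
  | ⟨s :: l, _, hsl, hu⟩, ⟨n, hn, hv⟩ =>
      let ⟨hs, hl⟩ := List.forall_mem_cons.1 hsl
      ⟨s :: Tm.plus s n :: l, List.cons_ne_nil _ _,
        List.forall_mem_cons.2 ⟨hs, List.forall_mem_cons.2 ⟨⟨hs, hn⟩, hl⟩⟩,
        .trans (.plus hu hv) (deriv_tauSum_cons_plus s n l)⟩

lemma HasNoTauForm.tau_pre {u : Tm A V} : HasNoTauForm u → HasTauSumForm (pre none u)
  | ⟨n, hn, hu⟩ =>
      ⟨[n], List.cons_ne_nil _ _, List.forall_mem_singleton.2 hn,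
        .trans (.pre none hu) (.symm (.ax (.A4 _)))⟩

lemma HasTauSumForm.tau_pre {u : Tm A V} : HasTauSumForm u → HasTauSumForm (pre none u)
  | ⟨[], hne, _, _⟩ => absurd rfl hne
  | ⟨s :: l, hne, hl, hu⟩ =>
      ⟨s :: l, hne, hl, .trans (.pre none hu) (deriv_tau_tau_plus s (tauSum l))⟩

lemma HasNoTauForm.pre_some (a : A) {u : Tm A V} :
    HasNoTauForm u → HasNoTauForm (pre (some a) u)
  | ⟨n, hn, hu⟩ => ⟨pre (some a) n, hn, .pre _ hu⟩

lemma HasTauSumForm.pre_some (a : A) {u : Tm A V} :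
    HasTauSumForm u → HasNoTauForm (pre (some a) u)
  | ⟨l, _, hl, hu⟩ =>
      let ⟨n, hn, hd⟩ := exists_noTau_deriv_pre_plus_tauSum a l nil hl trivial
      ⟨n, hn, .trans (.pre _ (.trans hu (.symm (.ax (.A4 _))))) hd⟩

theorem hasNoTauForm_or_hasTauSumForm : ∀ t : Tm A V,
    ((¬∃ t', Step t none t') ∧ HasNoTauForm t) ∨ HasTauSumForm t
  | nil => .inl ⟨(fun ⟨_, h⟩ => nomatch h), ⟨nil, trivial, .refl _⟩⟩
  | var x => .inl ⟨(fun ⟨_, h⟩ => nomatch h), ⟨var x, trivial, .refl _⟩⟩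
  | plus u v =>
    match hasNoTauForm_or_hasTauSumForm u, hasNoTauForm_or_hasTauSumForm v with
    | .inl ⟨hu, nu⟩, .inl ⟨hv, nv⟩ =>
        .inl ⟨fun
          | ⟨_, .plusL _ h⟩ => hu ⟨_, h⟩
          | ⟨_, .plusR _ h⟩ => hv ⟨_, h⟩, nu.plus nv⟩
    | .inr su, .inl ⟨_, nv⟩ => .inr (su.plus_hasNoTauForm nv)
    | .inl ⟨_, nu⟩, .inr sv => .inr ((sv.plus_hasNoTauForm nu).of_deriv (.ax (.A1 u v)))
    | .inr su, .inr sv => .inr (su.plus sv)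
  | pre none u => .inr <| (hasNoTauForm_or_hasTauSumForm u).elim (·.2.tau_pre) (·.tau_pre)
  | pre (some a) u =>
      .inl ⟨(fun ⟨_, h⟩ => nomatch h),
        (hasNoTauForm_or_hasTauSumForm u).elim (·.2.pre_some a) (·.pre_some a)⟩

end Tm

/-- every BCCS term with a τ-transition can be proved equal, from
A1-4 + WIF1 + WIF2, to a nonempty sum `Σ_{i∈I} τ t_i` with all `t_i` BCCSP terms. -/
theorem stmt3 {A V : Type} (t : Tm A V) (h : ∃ t', Tm.Step t none t') :
    ∃ l : List (Tm A V), l ≠ [] ∧ (∀ s ∈ l, Tm.NoTau s) ∧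
      Tm.Deriv Tm.AX t (Tm.listSum (l.map (fun s => Tm.pre none s))) :=
  (Tm.hasNoTauForm_or_hasTauSumForm t).resolve_left fun hn => hn.1 h
end

section
/- The axiom IF2: ax + a(y+z) ≈ a(x+y) + ax + a(y+z) is sound for closed BCCSP terms modulo impossible futures equivalence: for all closed terms p, q, r and actions a, the terms ap + a(q+r) and a(p+q) + ap + a(q+r) have exactly the same impossible futures. -/
/-- BCCSP terms over concrete actions `A` and variables `V` (no τ prefix). -/
inductive TmP (A V : Type) : Type
  | nil : TmP A V
  | var : V → TmP A V
  | plus : TmP A V → TmP A V → TmP A V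
  | pre : A → TmP A V → TmP A V

namespace TmP

variable {A V : Type}

/-- The operational semantics of BCCSP. -/
inductive Step : TmP A V → A → TmP A V → Prop
  | pre (a : A) (t : TmP A V) : Step (.pre a t) a t
  | plusL {t : TmP A V} {a : A} {t' : TmP A V} (u : TmP A V) :
      Step t a t' → Step (.plus t u) a t'
  | plusR (t : TmP A V) {u : TmP A V} {a : A} {u' : TmP A V} :
      Step u a u' → Step (.plus t u) a u'

/-- Traces leading to a state. -/
inductive TraceTo : TmP A V → List A → TmP A V → Prop
  | refl (t : TmP A V) : TraceTo t [] t
  | act {t : TmP A V} {a : A} {t' : TmP A V} {w : List A} {u : TmP A V} :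
      Step t a t' → TraceTo t' w u → TraceTo t (a :: w) u

/-- The set of traces of a term. -/
def T (t : TmP A V) : Set (List A) := {w | ∃ t', TraceTo t w t'}

/-- `(w, B)` is an impossible future of `t`. -/
def ImpFut (t : TmP A V) (w : List A) (B : Set (List A)) : Prop :=
  ∃ t', TraceTo t w t' ∧ ∀ s ∈ T t', s ∉ B

/-- The impossible futures preorder. -/
def IFle (p q : TmP A V) : Prop := ∀ w B, ImpFut p w B → ImpFut q w B

/-- Impossible futures equivalence. -/
def IFeq (p q : TmP A V) : Prop := IFle p q ∧ IFle q p

/-- The variables occurring in a term. -/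
def vars : TmP A V → Set V
  | nil => ∅
  | var x => {x}
  | plus t u => vars t ∪ vars u
  | pre _ t => vars t

/-- A term is closed if it contains no variables. -/
def Closed (t : TmP A V) : Prop := vars t = ∅

/-- Substitution. -/
def subst (σ : V → TmP A V) : TmP A V → TmP A V
  | nil => nil
  | var x => σ x
  | plus t u => plus (subst σ t) (subst σ u)
  | pre a t => pre a (subst σ t)

/-- `n`-fold prefixing with the action `a`. -/
def npre (a : A) : ℕ → TmP A V → TmP A V
  | 0, t => t
  | n + 1, t => pre a (npre a n t)

/-- Finite sums of terms. -/
def listSum : List (TmP A V) → TmP A V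
  | [] => nil
  | t :: l => plus t (listSum l)

/-- The axioms A1-4 + IF1 + IF2 (as instantiation-closed schemas; equational
axioms are listed in both directions for inequational derivability). -/
inductive AXIF : TmP A V → TmP A V → Prop
  | A1 (t u : TmP A V) : AXIF (.plus t u) (.plus u t)
  | A2 (t u v : TmP A V) : AXIF (.plus (.plus t u) v) (.plus t (.plus u v))
  | A2r (t u v : TmP A V) : AXIF (.plus t (.plus u v)) (.plus (.plus t u) v)
  | A3 (t : TmP A V) : AXIF (.plus t t) t
  | A3r (t : TmP A V) : AXIF t (.plus t t)
  | A4 (t : TmP A V) : AXIF (.plus t .nil) t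
  | A4r (t : TmP A V) : AXIF t (.plus t .nil)
  | IF1 (a : A) (t u : TmP A V) :
      AXIF (.pre a (.plus t u)) (.plus (.pre a t) (.pre a u))
  | IF2 (a : A) (t u v : TmP A V) :
      AXIF (.plus (.pre a t) (.pre a (.plus u v)))
           (.plus (.pre a (.plus t u)) (.plus (.pre a t) (.pre a (.plus u v))))
  | IF2r (a : A) (t u v : TmP A V) :
      AXIF (.plus (.pre a (.plus t u)) (.plus (.pre a t) (.pre a (.plus u v))))
           (.plus (.pre a t) (.pre a (.plus u v)))

/-- Equational derivability from an axiomatization `E`. -/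
inductive Deriv (E : TmP A V → TmP A V → Prop) : TmP A V → TmP A V → Prop
  | ax {t u : TmP A V} : E t u → Deriv E t u
  | inst {t u : TmP A V} (σ : V → TmP A V) : E t u → Deriv E (subst σ t) (subst σ u)
  | refl (t : TmP A V) : Deriv E t t
  | symm {t u : TmP A V} : Deriv E t u → Deriv E u t
  | trans {t u v : TmP A V} : Deriv E t u → Deriv E u v → Deriv E t v
  | pre (a : A) {t u : TmP A V} : Deriv E t u → Deriv E (.pre a t) (.pre a u)
  | plus {t u t' u' : TmP A V} :
      Deriv E t t' → Deriv E u u' → Deriv E (.plus t u) (.plus t' u')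

/-- Inequational derivability from an axiomatization `E` (no symmetry). -/
inductive IDeriv (E : TmP A V → TmP A V → Prop) : TmP A V → TmP A V → Prop
  | ax {t u : TmP A V} : E t u → IDeriv E t u
  | inst {t u : TmP A V} (σ : V → TmP A V) : E t u → IDeriv E (subst σ t) (subst σ u)
  | refl (t : TmP A V) : IDeriv E t t
  | trans {t u v : TmP A V} : IDeriv E t u → IDeriv E u v → IDeriv E t v
  | pre (a : A) {t u : TmP A V} : IDeriv E t u → IDeriv E (.pre a t) (.pre a u)
  | plus {t u t' u' : TmP A V} :
      IDeriv E t t' → IDeriv E u u' → IDeriv E (.plus t u) (.plus t' u')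

end TmP

namespace TmP

variable {A V : Type}

lemma trace_cons {t : TmP A V} {a : A} {w : List A} {t' : TmP A V}
    (h : TraceTo t (a :: w) t') : ∃ s, Step t a s ∧ TraceTo s w t' := by
  cases h with
  | act hs htr => exact ⟨_, hs, htr⟩

lemma trace_nil {t t' : TmP A V} (h : TraceTo t [] t') : t' = t := by
  cases h; rfl

lemma T_plus {t u : TmP A V} : T (plus t u) = T t ∪ T u := by
  ext w; constructor
  · rintro ⟨t', ht⟩
    cases ht with
    | refl => exact Or.inl ⟨t, .refl t⟩
    | act hs htr =>
      cases hs with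
      | plusL _ h => exact Or.inl ⟨_, .act h htr⟩
      | plusR _ h => exact Or.inr ⟨_, .act h htr⟩
  · rintro (⟨t', ht⟩ | ⟨t', ht⟩)
    · cases ht with
      | refl => exact ⟨_, .refl _⟩
      | act hs htr => exact ⟨_, .act (.plusL _ hs) htr⟩
    · cases ht with
      | refl => exact ⟨_, .refl _⟩
      | act hs htr => exact ⟨_, .act (.plusR _ hs) htr⟩

lemma T_pre {a : A} {t : TmP A V} {w : List A} :
    w ∈ T (pre a t) ↔ w = [] ∨ ∃ v, w = a :: v ∧ v ∈ T t := by
  constructor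
  · rintro ⟨t', ht⟩
    cases ht with
    | refl => exact Or.inl rfl
    | act hs htr => cases hs; exact Or.inr ⟨_, rfl, _, htr⟩
  · rintro (rfl | ⟨v, rfl, t', ht⟩)
    · exact ⟨_, .refl _⟩
    · exact ⟨_, .act (.pre a t) ht⟩

lemma impFut_nil {t : TmP A V} {B : Set (List A)} :
    ImpFut t [] B ↔ ∀ s ∈ T t, s ∉ B := by
  constructor
  · rintro ⟨t', ht, hB⟩
    rw [trace_nil ht] at hB
    exact hB
  · intro h; exact ⟨t, .refl t, h⟩

lemma T_L {p q r : TmP A V} {a : A} :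
    T (plus (pre a (plus p q)) (plus (pre a p) (pre a (plus q r)))) =
      T (plus (pre a p) (pre a (plus q r))) := by
  ext w
  simp only [T_plus, Set.mem_union]
  constructor
  · rintro (h | h)
    · rcases T_pre.mp h with rfl | ⟨v, rfl, hv⟩
      · exact Or.inl (T_pre.mpr (Or.inl rfl))
      · rw [T_plus] at hv
        rcases hv with hv | hv
        · exact Or.inl (T_pre.mpr (Or.inr ⟨v, rfl, hv⟩))
        · exact Or.inr (T_pre.mpr (Or.inr ⟨v, rfl, T_plus ▸ Set.mem_union_left _ hv⟩))
    · exact h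
  · exact Or.inr

end TmP

/-- IF2 `ax + a(y+z) ≈ a(x+y) + ax + a(y+z)` is sound modulo
impossible futures equivalence: both sides have exactly the same impossible
futures. -/
theorem stmt7 {A : Type} (p q r : TmP A Empty) (a : A) (w : List A) (B : Set (List A)) :
    TmP.ImpFut (.plus (.pre a p) (.pre a (.plus q r))) w B ↔
    TmP.ImpFut (.plus (.pre a (.plus p q)) (.plus (.pre a p) (.pre a (.plus q r)))) w B := by
  cases w with
  | nil => rw [TmP.impFut_nil, TmP.impFut_nil, TmP.T_L]
  | cons a' w' =>
    constructor
    · rintro ⟨t', ht, hB⟩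
      obtain ⟨s, hs, htr⟩ := TmP.trace_cons ht
      exact ⟨t', .act (.plusR _ hs) htr, hB⟩
    · rintro ⟨t', ht, hB⟩
      obtain ⟨s, hs, htr⟩ := TmP.trace_cons ht
      cases hs with
      | plusR _ h => exact ⟨t', .act h htr, hB⟩
      | plusL _ h =>
        cases h
        cases w' with
        | nil =>
          have h' := TmP.trace_nil htr
          subst h'
          exact ⟨p, .act (.plusL _ (.pre a p)) (.refl p),
            fun s hs => hB s (by rw [TmP.T_plus]; exact Or.inl hs)⟩
        | cons b w'' =>
          obtain ⟨s2, hs2, htr2⟩ := TmP.trace_cons htr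
          cases hs2 with
          | plusL _ h2 => exact ⟨t', .act (.plusL _ (.pre a p)) (.act h2 htr2), hB⟩
          | plusR _ h2 =>
            exact ⟨t', .act (.plusR _ (.pre a (.plus q r))) (.act (.plusL _ h2) htr2), hB⟩
end

section
/- For each closed BCCSP term q, define the saturation q̄ by recursion on depth: q̄ = q + Σ_{a ∈ I(q)} a( (Σ_{aq' summand of q} q')‾ ), where I(q) is the set of initial actions of q. Then A1–4 + IF1 + IF2 ⊢ q ≈ q̄. -/
namespace TmP

/-- The prefix summands of a closed BCCSP term. -/
def summands : TmP A Empty → List (A × TmP A Empty)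
  | .nil => []
  | .var _ => []
  | .plus t u => summands t ++ summands u
  | .pre a t => [(a, t)]

/-- The initial actions `I(q)` of `q` (listed without duplicates). -/
def inits [DecidableEq A] (q : TmP A Empty) : List A :=
  ((summands q).map Prod.fst).dedup

/-- `Σ_{aq' summand of q} q'`. -/
def after [DecidableEq A] (q : TmP A Empty) (a : A) : TmP A Empty :=
  listSum (((summands q).filter (fun p => p.1 = a)).map Prod.snd)

/-- `Sat q q̄` : `q̄` is the saturation of `q`, defined by the recursion
`q̄ = q + Σ_{a ∈ I(q)} a((Σ_{aq' summand of q} q')‾)`. -/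
inductive Sat {A : Type} [DecidableEq A] : TmP A Empty → TmP A Empty → Prop
  | mk (q : TmP A Empty) (f : A → TmP A Empty) :
      (∀ a ∈ inits q, Sat (after q a) (f a)) →
      Sat q (.plus q (listSum ((inits q).map (fun a => TmP.pre a (f a)))))

end TmP

namespace TmP

variable {A : Type}

/-- Both inequational directions. -/
def E2 (t u : TmP A Empty) : Prop := IDeriv AXIF t u ∧ IDeriv AXIF u t

local infix:50 " ≋ " => E2

lemma E2.rfl (t : TmP A Empty) : E2 t t := ⟨.refl t, .refl t⟩

lemma E2.symm {t u : TmP A Empty} (h : E2 t u) : E2 u t := ⟨h.2, h.1⟩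

lemma E2.trans {t u v : TmP A Empty} (h : E2 t u) (h' : E2 u v) : E2 t v :=
  ⟨h.1.trans h'.1, h'.2.trans h.2⟩

instance : Trans (E2 (A := A)) E2 E2 := ⟨E2.trans⟩

lemma E2.plus {t u t' u' : TmP A Empty} (h : E2 t t') (h' : E2 u u') :
    E2 (.plus t u) (.plus t' u') := ⟨h.1.plus h'.1, h.2.plus h'.2⟩

lemma E2.pre (a : A) {t u : TmP A Empty} (h : E2 t u) :
    E2 (.pre a t) (.pre a u) := ⟨h.1.pre a, h.2.pre a⟩

lemma e2_comm (t u : TmP A Empty) : E2 (.plus t u) (.plus u t) :=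
  ⟨.ax (.A1 t u), .ax (.A1 u t)⟩

lemma e2_assoc (t u v : TmP A Empty) :
    E2 (.plus (.plus t u) v) (.plus t (.plus u v)) :=
  ⟨.ax (.A2 t u v), .ax (.A2r t u v)⟩

lemma e2_A3 (t : TmP A Empty) : E2 (.plus t t) t := ⟨.ax (.A3 t), .ax (.A3r t)⟩

lemma e2_A4 (t : TmP A Empty) : E2 (.plus t .nil) t := ⟨.ax (.A4 t), .ax (.A4r t)⟩

lemma e2_rot (x y z : TmP A Empty) :
    E2 (.plus (.plus x y) z) (.plus (.plus x z) y) :=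
  ((e2_assoc x y z).trans ((E2.rfl x).plus (e2_comm y z))).trans (e2_assoc x z y).symm

lemma e2_if2' (a : A) (t u : TmP A Empty) :
    E2 (.plus (.pre a t) (.pre a u))
       (.plus (.pre a (.plus t u)) (.plus (.pre a t) (.pre a u))) := by
  calc TmP.plus (.pre a t) (.pre a u)
      ≋ TmP.plus (.pre a t) (.pre a (.plus u .nil)) :=
        (E2.rfl _).plus (E2.pre a (e2_A4 u).symm)
    _ ≋ TmP.plus (.pre a (.plus t u)) (.plus (.pre a t) (.pre a (.plus u .nil))) :=
        ⟨.ax (.IF2 a t u .nil), .ax (.IF2r a t u .nil)⟩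
    _ ≋ TmP.plus (.pre a (.plus t u)) (.plus (.pre a t) (.pre a u)) :=
        (E2.rfl _).plus ((E2.rfl _).plus (E2.pre a (e2_A4 u)))

lemma ifStep {q t u : TmP A Empty} {a : A}
    (h1 : E2 (.plus q (.pre a t)) q) (h2 : E2 (.plus q (.pre a u)) q) :
    E2 (.plus q (.pre a (.plus t u))) q := by
  have hXY : E2 (.plus q (.plus (.pre a t) (.pre a u))) q :=
    ((e2_assoc q (.pre a t) (.pre a u)).symm.trans (h1.plus (E2.rfl _))).trans h2
  refine E2.symm ?_
  calc q ≋ TmP.plus q (.plus (.pre a t) (.pre a u)) := hXY.symm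
    _ ≋ TmP.plus q (.plus (.pre a (.plus t u)) (.plus (.pre a t) (.pre a u))) :=
        (E2.rfl q).plus (e2_if2' a t u)
    _ ≋ TmP.plus (.plus q (.pre a (.plus t u))) (.plus (.pre a t) (.pre a u)) :=
        (e2_assoc _ _ _).symm
    _ ≋ TmP.plus (.plus q (.plus (.pre a t) (.pre a u))) (.pre a (.plus t u)) :=
        e2_rot _ _ _
    _ ≋ TmP.plus q (.pre a (.plus t u)) := hXY.plus (E2.rfl _)

lemma absorbList {q : TmP A Empty} :
    ∀ L : List (TmP A Empty), (∀ s ∈ L, E2 (.plus q s) q) →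
      E2 (.plus q (listSum L)) q
  | [], _ => e2_A4 q
  | s :: L, h => by
      have ih := absorbList L (fun s hs => h s (List.mem_cons_of_mem _ hs))
      calc TmP.plus q (listSum (s :: L))
          ≋ TmP.plus (.plus q s) (listSum L) := (e2_assoc _ _ _).symm
        _ ≋ TmP.plus q (listSum L) := (h s (List.mem_cons_self ..)).plus (E2.rfl _)
        _ ≋ q := ih

lemma summand_absorb : ∀ {q : TmP A Empty} {a : A} {t : TmP A Empty},
    (a, t) ∈ summands q → E2 (.plus q (.pre a t)) q
  | .nil, _, _, h => by simp [summands] at h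
  | .var x, _, _, _ => x.elim
  | .plus t0 u0, a, t, h => by
      rw [summands, List.mem_append] at h
      rcases h with h | h
      · have ih := summand_absorb h
        calc TmP.plus (.plus t0 u0) (.pre a t)
            ≋ TmP.plus (.plus t0 (.pre a t)) u0 := e2_rot _ _ _
          _ ≋ TmP.plus t0 u0 := ih.plus (E2.rfl _)
      · have ih := summand_absorb h
        calc TmP.plus (.plus t0 u0) (.pre a t)
            ≋ TmP.plus t0 (.plus u0 (.pre a t)) := e2_assoc _ _ _
          _ ≋ TmP.plus t0 u0 := (E2.rfl _).plus ih
  | .pre b s, a, t, h => by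
      simp only [summands, List.mem_singleton, Prod.mk.injEq] at h
      obtain ⟨rfl, rfl⟩ := h
      exact e2_A3 _

lemma preSum {q : TmP A Empty} {a : A} :
    ∀ L : List (TmP A Empty), L ≠ [] → (∀ t ∈ L, E2 (.plus q (.pre a t)) q) →
      E2 (.plus q (.pre a (listSum L))) q
  | [], h, _ => absurd rfl h
  | [t], _, h => by
      have h1 := h t (List.mem_singleton_self t)
      calc TmP.plus q (.pre a (listSum [t]))
          ≋ TmP.plus q (.pre a t) := (E2.rfl q).plus (E2.pre a (e2_A4 t))
        _ ≋ q := h1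
  | t :: s :: L, _, h => by
      have ih := preSum (s :: L) (by simp) (fun t ht => h t (List.mem_cons_of_mem _ ht))
      exact ifStep (h t (List.mem_cons_self ..)) ih

section
variable [DecidableEq A]

lemma mem_after {q : TmP A Empty} {a : A} {t : TmP A Empty}
    (h : t ∈ ((summands q).filter (fun p => p.1 = a)).map Prod.snd) :
    (a, t) ∈ summands q := by
  rcases List.mem_map.1 h with ⟨⟨b, s⟩, hp, rfl⟩
  rcases List.mem_filter.1 hp with ⟨hmem, hb⟩
  simp only [decide_eq_true_eq] at hb
  subst hb; exact hmem

lemma mem_inits {q : TmP A Empty} {a : A} (h : a ∈ inits q) :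
    ∃ t, (a, t) ∈ summands q := by
  rw [inits, List.mem_dedup, List.mem_map] at h
  rcases h with ⟨⟨b, s⟩, hmem, rfl⟩
  exact ⟨s, hmem⟩

lemma after_absorb {q : TmP A Empty} {a : A} (h : a ∈ inits q) :
    E2 (.plus q (.pre a (after q a))) q := by
  apply preSum
  · obtain ⟨t, ht⟩ := mem_inits h
    intro hL
    have : t ∈ ((summands q).filter (fun p => p.1 = a)).map Prod.snd := by
      refine List.mem_map.2 ⟨(a, t), List.mem_filter.2 ⟨ht, by simp⟩, rfl⟩
    rw [hL] at this
    simp at this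
  · intro t ht
    exact summand_absorb (mem_after ht)

end

/-- Depth of a term. -/
def depth : TmP A Empty → ℕ
  | .nil => 0
  | .var _ => 0
  | .plus t u => max (depth t) (depth u)
  | .pre _ t => depth t + 1

lemma summand_depth : ∀ {q : TmP A Empty} {a : A} {t : TmP A Empty},
    (a, t) ∈ summands q → depth t < depth q
  | .nil, _, _, h => by simp [summands] at h
  | .var x, _, _, _ => x.elim
  | .plus t0 u0, a, t, h => by
      rw [summands, List.mem_append] at h
      rcases h with h | h
      · have := summand_depth h; simp [depth]; omega
      · have := summand_depth h; simp [depth]; omega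
  | .pre b s, a, t, h => by
      simp only [summands, List.mem_singleton, Prod.mk.injEq] at h
      obtain ⟨rfl, rfl⟩ := h
      simp [depth]

lemma listSum_depth {n : ℕ} (hn : 0 < n) :
    ∀ L : List (TmP A Empty), (∀ t ∈ L, depth t < n) → depth (listSum L) < n
  | [], _ => by simpa [listSum, depth] using hn
  | t :: L, h => by
      have ih := listSum_depth hn L (fun t ht => h t (List.mem_cons_of_mem _ ht))
      have := h t (List.mem_cons_self ..)
      simp only [listSum, depth]; omega

lemma after_depth [DecidableEq A] {q : TmP A Empty} {a : A} (h : a ∈ inits q) :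
    depth (after q a) < depth q := by
  obtain ⟨t, ht⟩ := mem_inits h
  have hpos : 0 < depth q := Nat.lt_of_le_of_lt (Nat.zero_le _) (summand_depth ht)
  exact listSum_depth hpos _ (fun s hs => summand_depth (mem_after hs))

lemma sat_main [DecidableEq A] :
    ∀ n (q : TmP A Empty), depth q < n → ∃ qb, Sat q qb ∧ E2 q qb := by
  intro n
  induction n with
  | zero => intro q h; omega
  | succ n ih =>
    intro q hq
    have hch : ∀ a : A, ∃ t, a ∈ inits q → Sat (after q a) t ∧ E2 (after q a) t := by
      intro a
      by_cases ha : a ∈ inits q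
      · obtain ⟨t, h1, h2⟩ := ih (after q a) (by have := after_depth ha; omega)
        exact ⟨t, fun _ => ⟨h1, h2⟩⟩
      · exact ⟨.nil, fun h => absurd h ha⟩
    choose f hf using hch
    refine ⟨_, Sat.mk q f (fun a ha => (hf a ha).1), ?_⟩
    refine E2.symm ?_
    refine E2.trans (absorbList _ ?_) (E2.rfl q).symm |>.symm.symm
    intro s hs
    rcases List.mem_map.1 hs with ⟨a, ha, rfl⟩
    calc TmP.plus q (.pre a (f a))
        ≋ TmP.plus q (.pre a (after q a)) :=
          (E2.rfl q).plus (E2.pre a ((hf a ha).2).symm)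
      _ ≋ q := after_absorb ha

end TmP

/-- the saturation `q̄` of a closed BCCSP term `q` exists, and
A1-4 + IF1 + IF2 ⊢ `q ≈ q̄` (both inequational directions). -/
theorem stmt8 {A : Type} [DecidableEq A] (q : TmP A Empty) :
    ∃ qb : TmP A Empty, TmP.Sat q qb ∧
      TmP.IDeriv TmP.AXIF q qb ∧ TmP.IDeriv TmP.AXIF qb q := by
  obtain ⟨qb, hs, h⟩ := TmP.sat_main (TmP.depth q + 1) q (by omega)
  exact ⟨qb, hs, h.1, h.2⟩
end

section
/- For each m ≥ 0 and action a, the closed equation τa^{2m}0 + τ(a^m0 + a^{2m}0) ≈ τ(a^m0 + a^{2m}0) is sound modulo weak impossible futures equivalence. -/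
/-- `a^n 0` as a closed BCCS term. -/
def apow {A : Type} (a : A) (n : ℕ) : Tm A Empty := Tm.npre a n .nil

section Aux
open Tm

variable {A : Type} {a : A} {m : ℕ}

lemma step_apow {k : ℕ} {α : Option A} {u : Tm A Empty} (h : Tm.Step (apow a k) α u) :
    ∃ k', k = k' + 1 ∧ α = some a ∧ u = apow a k' := by
  cases k with
  | zero => cases h
  | succ n => cases h; exact ⟨n, rfl, rfl, rfl⟩

lemma wtrace_apow_char {t : Tm A Empty} {w : List A} {u : Tm A Empty}
    (h : Tm.WTraceTo t w u) :
    ∀ k, t = apow a k → ∃ i, i ≤ k ∧ w = List.replicate i a := by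
  induction h with
  | refl => exact fun k _ => ⟨0, Nat.zero_le _, rfl⟩
  | tau h1 _ _ =>
      rintro k rfl
      obtain ⟨k', _, hα, _⟩ := step_apow h1
      cases hα
  | act h1 _ ih =>
      rintro k rfl
      obtain ⟨k', rfl, hα, rfl⟩ := step_apow h1
      obtain ⟨i, hi, rfl⟩ := ih k' rfl
      injection hα with hα
      subst hα
      exact ⟨i + 1, Nat.succ_le_succ hi, rfl⟩

lemma wtrace_apow_mem : ∀ i k, i ≤ k → ∃ u : Tm A Empty, Tm.WTraceTo (apow a k) (List.replicate i a) u := by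
  intro i
  induction i with
  | zero => exact fun k _ => ⟨_, .refl _⟩
  | succ n ih =>
      intro k hk
      cases k with
      | zero => omega
      | succ k' =>
          obtain ⟨u, hu⟩ := ih k' (by omega)
          exact ⟨u, .act (Tm.Step.pre (some a) (apow a k')) hu⟩

lemma wtrace_Q_char {w : List A} {u : Tm A Empty}
    (h : Tm.WTraceTo (.plus (apow a m) (apow a (2 * m))) w u) :
    ∃ i, i ≤ 2 * m ∧ w = List.replicate i a := by
  cases h with
  | refl => exact ⟨0, Nat.zero_le _, rfl⟩
  | tau h1 h2 =>
      cases h1 with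
      | plusL _ h => obtain ⟨_, _, hα, _⟩ := step_apow h; cases hα
      | plusR _ h => obtain ⟨_, _, hα, _⟩ := step_apow h; cases hα
  | act h1 h2 =>
      cases h1 with
      | plusL _ h =>
          obtain ⟨k', hm, hα, rfl⟩ := step_apow h
          obtain ⟨i, hi, rfl⟩ := wtrace_apow_char h2 k' rfl
          injection hα with hα; subst hα
          exact ⟨i + 1, by omega, rfl⟩
      | plusR _ h =>
          obtain ⟨k', hm, hα, rfl⟩ := step_apow h
          obtain ⟨i, hi, rfl⟩ := wtrace_apow_char h2 k' rfl
          injection hα with hα; subst hα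
          exact ⟨i + 1, by omega, rfl⟩

lemma wtrace_plus_right {V : Type} {s t : Tm A V} {w : List A} {u : Tm A V}
    (h : Tm.WTraceTo t w u) :
    (w = [] ∧ u = t) ∨ Tm.WTraceTo (.plus s t) w u := by
  cases h with
  | refl => exact Or.inl ⟨rfl, rfl⟩
  | tau h1 h2 => exact Or.inr (.tau (.plusR _ h1) h2)
  | act h1 h2 => exact Or.inr (.act (.plusR _ h1) h2)

lemma wtrace_pre_none {V : Type} {t : Tm A V} {w : List A} {u : Tm A V}
    (h : Tm.WTraceTo (.pre none t) w u) :
    (w = [] ∧ u = .pre none t) ∨ Tm.WTraceTo t w u := by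
  cases h with
  | refl => exact Or.inl ⟨rfl, rfl⟩
  | tau h1 h2 => cases h1; exact Or.inr h2
  | act h1 h2 => cases h1

lemma wtQ_sub {w : List A} (h : w ∈ Tm.WT (Tm.plus (apow a m) (apow a (2 * m)))) :
    w ∈ Tm.WT (apow a (2 * m)) := by
  obtain ⟨u, hu⟩ := h
  obtain ⟨i, hi, rfl⟩ := wtrace_Q_char hu
  exact wtrace_apow_mem i (2 * m) hi

end Aux

/-- for each `m ≥ 0` the closed equation
`τa^{2m}0 + τ(a^m0 + a^{2m}0) ≈ τ(a^m0 + a^{2m}0)` is sound modulo weak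
impossible futures equivalence. -/
theorem stmt10 {A : Type} (a : A) (m : ℕ) :
    Tm.WIFeq
      (.plus (.pre none (apow a (2 * m)))
             (.pre none (.plus (apow a m) (apow a (2 * m)))))
      (.pre none (.plus (apow a m) (apow a (2 * m)))) := by
  have wtq_sub_wtp : ∀ s ∈ Tm.WT (Tm.pre none (Tm.plus (apow a m) (apow a (2*m))) : Tm A Empty), s ∈ Tm.WT (Tm.plus (Tm.pre none (apow a (2*m))) (Tm.pre none (Tm.plus (apow a m) (apow a (2*m)))) : Tm A Empty) := by
    rintro s ⟨u, hu⟩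
    rcases wtrace_pre_none hu with ⟨rfl, rfl⟩ | h
    · exact ⟨_, .refl (Tm.plus (Tm.pre none (apow a (2*m))) (Tm.pre none (Tm.plus (apow a m) (apow a (2*m)))))⟩
    · exact ⟨u, .tau (.plusR _ (.pre none (Tm.plus (apow a m) (apow a (2*m))))) h⟩
  have wtp_sub_wtq : ∀ s ∈ Tm.WT (Tm.plus (Tm.pre none (apow a (2*m))) (Tm.pre none (Tm.plus (apow a m) (apow a (2*m)))) : Tm A Empty), s ∈ Tm.WT (Tm.pre none (Tm.plus (apow a m) (apow a (2*m))) : Tm A Empty) := by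
    rintro s ⟨u, hu⟩
    cases hu with
    | refl => exact ⟨_, .refl (Tm.pre none (Tm.plus (apow a m) (apow a (2*m))))⟩
    | tau h1 h2 =>
        cases h1 with
        | plusL _ h =>
            cases h
            obtain ⟨i, hi, rfl⟩ := wtrace_apow_char h2 (2 * m) rfl
            obtain ⟨u', hu'⟩ := wtrace_apow_mem (a := a) (A := A) i (2 * m) hi
            rcases wtrace_plus_right (s := apow a m) hu' with ⟨he, _⟩ | h'
            · exact ⟨Tm.plus (apow a m) (apow a (2*m)), .tau (.pre none (Tm.plus (apow a m) (apow a (2*m)))) (he ▸ .refl (Tm.plus (apow a m) (apow a (2*m))))⟩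
            · exact ⟨u', .tau (.pre none (Tm.plus (apow a m) (apow a (2*m)))) h'⟩
        | plusR _ h =>
            cases h
            exact ⟨u, .tau (.pre none (Tm.plus (apow a m) (apow a (2*m)))) h2⟩
    | act h1 h2 =>
        cases h1 with
        | plusL _ h => cases h
        | plusR _ h => cases h
  have wteq : Tm.WT (Tm.plus (Tm.pre none (apow a (2*m))) (Tm.pre none (Tm.plus (apow a m) (apow a (2*m)))) : Tm A Empty) = Tm.WT (Tm.pre none (Tm.plus (apow a m) (apow a (2*m))) : Tm A Empty) := Set.Subset.antisymm wtp_sub_wtq wtq_sub_wtp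
  constructor
  · refine ⟨?_, wteq, fun _ => ⟨Tm.plus (apow a m) (apow a (2*m)), .pre none _⟩⟩
    rintro w B ⟨t', ht', hB⟩
    cases ht' with
    | refl => exact ⟨_, .refl (Tm.pre none (Tm.plus (apow a m) (apow a (2*m)))), fun s hs => hB s (wtq_sub_wtp s hs)⟩
    | tau h1 h2 =>
        cases h1 with
        | plusL _ h =>
            cases h
            rcases wtrace_plus_right (s := apow a m) h2 with ⟨rfl, rfl⟩ | h'
            · exact ⟨Tm.plus (apow a m) (apow a (2*m)), .tau (.pre none (Tm.plus (apow a m) (apow a (2*m)))) (.refl (Tm.plus (apow a m) (apow a (2*m)))), fun s hs => hB s (wtQ_sub hs)⟩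
            · exact ⟨t', .tau (.pre none (Tm.plus (apow a m) (apow a (2*m)))) h', hB⟩
        | plusR _ h =>
            cases h
            exact ⟨t', .tau (.pre none (Tm.plus (apow a m) (apow a (2*m)))) h2, hB⟩
    | act h1 h2 =>
        cases h1 with
        | plusL _ h => cases h
        | plusR _ h => cases h
  · refine ⟨?_, wteq.symm, fun _ => ⟨apow a (2*m), .plusL _ (.pre none (apow a (2*m)))⟩⟩
    rintro w B ⟨t', ht', hB⟩
    rcases wtrace_pre_none ht' with ⟨rfl, rfl⟩ | h
    · exact ⟨_, .refl (Tm.plus (Tm.pre none (apow a (2*m))) (Tm.pre none (Tm.plus (apow a m) (apow a (2*m))))), fun s hs => hB s (wtp_sub_wtq s hs)⟩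
    · exact ⟨t', .tau (.plusR _ (.pre none (Tm.plus (apow a m) (apow a (2*m))))) h, hB⟩
end

section
/- There is no finite axiomatization E over closed BCCS terms that is both sound and ground-complete for BCCS(A) modulo weak impossible futures equivalence. -/
namespace Tm

open List (replicate)

variable {A V : Type} {a : A} {m : ℕ}

theorem closed_plus_iff {t u : Tm A V} : Closed (plus t u) ↔ Closed t ∧ Closed u := by
  simp [Closed, vars]

theorem closed_pre_iff {α : Option A} {t : Tm A V} : Closed (pre α t) ↔ Closed t := Iff.rfl

theorem closed_nil : Closed (nil : Tm A V) := rfl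

theorem closed_subst {σ : V → Tm A V} (hσ : ClosedSub σ) (t : Tm A V) :
    Closed (subst σ t) := by
  induction t with
  | nil => exact closed_nil
  | var x => exact hσ x
  | plus t u iht ihu => exact closed_plus_iff.2 ⟨iht, ihu⟩
  | pre α t ih => exact closed_pre_iff.2 ih

theorem subst_eq_self_of_closed (σ : V → Tm A V) {t : Tm A V} (h : Closed t) :
    subst σ t = t := by
  induction t with
  | nil => rfl
  | var x => simp [Closed, vars] at h
  | plus t u iht ihu =>
      obtain ⟨ht, hu⟩ := closed_plus_iff.1 h
      rw [subst, iht ht, ihu hu]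
  | pre α t ih => rw [subst, ih (closed_pre_iff.1 h)]

theorem subst_subst (σ ρ : V → Tm A V) (t : Tm A V) :
    subst σ (subst ρ t) = subst (fun x => subst σ (ρ x)) t := by
  induction t with
  | nil => rfl
  | var x => rfl
  | plus t u iht ihu => rw [subst, subst, subst, iht, ihu]
  | pre α t ih => rw [subst, subst, subst, ih]

theorem not_step_nil {α : Option A} {s : Tm A V} : ¬ Step nil α s := nofun

theorem step_subst (σ : V → Tm A V) {t t' : Tm A V} {α : Option A} (h : Step t α t') :
    Step (subst σ t) α (subst σ t') := by
  induction h with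
  | pre α t => exact Step.pre α (subst σ t)
  | plusL u _ ih => exact Step.plusL (subst σ u) ih
  | plusR t _ ih => exact Step.plusR (subst σ t) ih

theorem step_subst_of_mem_initVars {σ : V → Tm A V} {t : Tm A V} {x : V} {α : Option A}
    {s : Tm A V} (hx : x ∈ initVars t) (h : Step (σ x) α s) : Step (subst σ t) α s := by
  induction t with
  | nil | pre => simp [initVars] at hx
  | var y => obtain rfl : x = y := hx; exact h
  | plus t u iht ihu =>
      rcases hx with hx | hx
      · exact Step.plusL _ (iht hx)
      · exact Step.plusR _ (ihu hx)

theorem step_subst_cases {σ : V → Tm A V} {t : Tm A V} {α : Option A} {s : Tm A V}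
    (h : Step (subst σ t) α s) :
    (∃ t', Step t α t' ∧ s = subst σ t') ∨ ∃ x ∈ initVars t, Step (σ x) α s := by
  induction t with
  | nil => exact absurd h not_step_nil
  | var x => exact Or.inr ⟨x, rfl, h⟩
  | plus t u iht ihu =>
      cases h with
      | plusL _ h =>
          rcases iht h with ⟨t', ht', rfl⟩ | ⟨x, hx, hstep⟩
          · exact Or.inl ⟨t', Step.plusL _ ht', rfl⟩
          · exact Or.inr ⟨x, Or.inl hx, hstep⟩
      | plusR _ h =>
          rcases ihu h with ⟨u', hu', rfl⟩ | ⟨x, hx, hstep⟩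
          · exact Or.inl ⟨u', Step.plusR _ hu', rfl⟩
          · exact Or.inr ⟨x, Or.inr hx, hstep⟩
  | pre β t => cases h; exact Or.inl ⟨t, Step.pre _ t, rfl⟩

theorem wdepth_le_of_step {t t' : Tm A V} {α : Option A} (h : Step t α t') :
    wdepth t' + α.toList.length ≤ wdepth t := by
  induction h with
  | pre β t => cases β <;> simp [wdepth]
  | plusL u _ ih => exact ih.trans (le_max_left _ _)
  | plusR t _ ih => exact ih.trans (le_max_right _ _)

inductive ProperWTraceTo : Tm A V → List A → Tm A V → Prop
  | tau {t t' : Tm A V} {w : List A} {u : Tm A V} :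
      Step t none t' → WTraceTo t' w u → ProperWTraceTo t w u
  | act {t : Tm A V} {b : A} {t' : Tm A V} {w : List A} {u : Tm A V} :
      Step t (some b) t' → WTraceTo t' w u → ProperWTraceTo t (b :: w) u

theorem ProperWTraceTo.wtraceTo {t s : Tm A V} {w : List A} (h : ProperWTraceTo t w s) :
    WTraceTo t w s := by
  cases h with
  | tau h₁ h₂ => exact WTraceTo.tau h₁ h₂
  | act h₁ h₂ => exact WTraceTo.act h₁ h₂

theorem WTraceTo.eq_or_proper {t s : Tm A V} {w : List A} (h : WTraceTo t w s) :
    (w = [] ∧ s = t) ∨ ProperWTraceTo t w s := by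
  cases h with
  | refl => exact Or.inl ⟨rfl, rfl⟩
  | tau h₁ h₂ => exact Or.inr (ProperWTraceTo.tau h₁ h₂)
  | act h₁ h₂ => exact Or.inr (ProperWTraceTo.act h₁ h₂)

theorem WTraceTo.proper_of_ne_nil {t s : Tm A V} {w : List A} (h : WTraceTo t w s)
    (hw : w ≠ []) : ProperWTraceTo t w s :=
  h.eq_or_proper.resolve_left fun h' => hw h'.1

theorem ProperWTraceTo.nil_of_no_tau {t s : Tm A V} (h : ProperWTraceTo t [] s)
    (ht : ∀ t', ¬ Step t none t') : False := by
  match h with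
  | .tau h₁ _ => exact ht _ h₁

theorem ProperWTraceTo.of_step {t t' s : Tm A V} {w : List A}
    (hstep : ∀ α r, Step t α r → Step t' α r) (h : ProperWTraceTo t w s) :
    ProperWTraceTo t' w s := by
  cases h with
  | tau h₁ h₂ => exact ProperWTraceTo.tau (hstep _ _ h₁) h₂
  | act h₁ h₂ => exact ProperWTraceTo.act (hstep _ _ h₁) h₂

theorem ProperWTraceTo.plus_left {t s : Tm A V} {w : List A} (u : Tm A V)
    (h : ProperWTraceTo t w s) : ProperWTraceTo (plus t u) w s :=
  h.of_step fun _ _ => Step.plusL u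

theorem ProperWTraceTo.plus_right {u s : Tm A V} {w : List A} (t : Tm A V)
    (h : ProperWTraceTo u w s) : ProperWTraceTo (plus t u) w s :=
  h.of_step fun _ _ => Step.plusR t

theorem ProperWTraceTo.plus_cases {t u s : Tm A V} {w : List A}
    (h : ProperWTraceTo (plus t u) w s) : ProperWTraceTo t w s ∨ ProperWTraceTo u w s := by
  cases h with
  | tau h₁ h₂ =>
      cases h₁ with
      | plusL _ h₁ => exact Or.inl (ProperWTraceTo.tau h₁ h₂)
      | plusR _ h₁ => exact Or.inr (ProperWTraceTo.tau h₁ h₂)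
  | act h₁ h₂ =>
      cases h₁ with
      | plusL _ h₁ => exact Or.inl (ProperWTraceTo.act h₁ h₂)
      | plusR _ h₁ => exact Or.inr (ProperWTraceTo.act h₁ h₂)

theorem properWTraceTo_pre_none_iff {t s : Tm A V} {w : List A} :
    ProperWTraceTo (pre none t) w s ↔ WTraceTo t w s := by
  refine ⟨fun h => ?_, ProperWTraceTo.tau (Step.pre none t)⟩
  cases h with
  | tau h₁ h₂ => cases h₁; exact h₂
  | act h₁ _ => cases h₁

theorem wtraceTo_append {t s r : Tm A V} {w₁ w₂ : List A}
    (h₁ : WTraceTo t w₁ s) (h₂ : WTraceTo s w₂ r) : WTraceTo t (w₁ ++ w₂) r := by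
  induction h₁ with
  | refl => exact h₂
  | tau hstep _ ih => exact WTraceTo.tau hstep (ih h₂)
  | act hstep _ ih => exact WTraceTo.act hstep (ih h₂)

theorem ProperWTraceTo.append {t s r : Tm A V} {w₁ w₂ : List A} (h₁ : ProperWTraceTo t w₁ s)
    (h₂ : WTraceTo s w₂ r) : ProperWTraceTo t (w₁ ++ w₂) r := by
  cases h₁ with
  | tau h h' => exact ProperWTraceTo.tau h (wtraceTo_append h' h₂)
  | act h h' => exact ProperWTraceTo.act h (wtraceTo_append h' h₂)

theorem WTraceTo.of_pre_none {t s : Tm A V} {w : List A} (h : WTraceTo (pre none t) w s) :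
    (w = [] ∧ s = pre none t) ∨ WTraceTo t w s :=
  h.eq_or_proper.imp_right properWTraceTo_pre_none_iff.1

theorem WTraceTo.exists_of_append {t r : Tm A V} {w₁ w₂ : List A}
    (h : WTraceTo t (w₁ ++ w₂) r) : ∃ s, WTraceTo t w₁ s ∧ WTraceTo s w₂ r := by
  generalize hw : w₁ ++ w₂ = w at h
  induction h generalizing w₁ with
  | refl t =>
      obtain ⟨rfl, rfl⟩ := List.append_eq_nil_iff.1 hw
      exact ⟨t, WTraceTo.refl t, WTraceTo.refl t⟩
  | tau hstep _ ih =>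
      obtain ⟨s, hs₁, hs₂⟩ := ih hw
      exact ⟨s, WTraceTo.tau hstep hs₁, hs₂⟩
  | act hstep htr ih =>
      cases w₁ with
      | nil => subst hw; exact ⟨_, WTraceTo.refl _, WTraceTo.act hstep htr⟩
      | cons b w₁ =>
          simp only [List.cons_append, List.cons.injEq] at hw
          obtain ⟨rfl, hw⟩ := hw
          obtain ⟨s, hs₁, hs₂⟩ := ih hw
          exact ⟨s, WTraceTo.act hstep hs₁, hs₂⟩

theorem WTraceTo.length_add_wdepth_le {t s : Tm A V} {w : List A} (h : WTraceTo t w s) :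
    w.length + wdepth s ≤ wdepth t := by
  induction h with
  | refl => simp
  | tau hstep _ ih => simpa using ih.trans (wdepth_le_of_step hstep)
  | act hstep _ ih =>
      have := wdepth_le_of_step hstep
      simp only [Option.toList_some, List.length_cons, List.length_nil] at this ⊢
      omega

theorem WTraceTo.length_le_wdepth {t s : Tm A V} {w : List A} (h : WTraceTo t w s) :
    w.length ≤ wdepth t :=
  le_of_add_le_left h.length_add_wdepth_le

theorem WTraceTo.wdepth_le {t s : Tm A V} {w : List A} (h : WTraceTo t w s) :
    wdepth s ≤ wdepth t :=
  le_of_add_le_right h.length_add_wdepth_le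

theorem wtraceTo_subst (σ : V → Tm A V) {t s : Tm A V} {w : List A} (h : WTraceTo t w s) :
    WTraceTo (subst σ t) w (subst σ s) := by
  induction h with
  | refl => exact WTraceTo.refl _
  | tau hstep _ ih => exact WTraceTo.tau (step_subst σ hstep) ih
  | act hstep _ ih => exact WTraceTo.act (step_subst σ hstep) ih

theorem ProperWTraceTo.subst_of_mem_initVars {σ : V → Tm A V} {t : Tm A V} {x : V}
    {w : List A} {s : Tm A V} (hx : x ∈ initVars t) (h : ProperWTraceTo (σ x) w s) :
    ProperWTraceTo (subst σ t) w s :=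
  h.of_step fun _ _ => step_subst_of_mem_initVars hx

theorem not_properWTraceTo_nil {w : List A} {s : Tm A V} : ¬ ProperWTraceTo nil w s := by
  rintro (⟨h, -⟩ | ⟨h, -⟩) <;> exact not_step_nil h

theorem properWTraceTo_subst (σ : V → Tm A V) {t s : Tm A V} {w : List A}
    (h : ProperWTraceTo t w s) : ProperWTraceTo (subst σ t) w (subst σ s) := by
  cases h with
  | tau h h' => exact ProperWTraceTo.tau (step_subst σ h) (wtraceTo_subst σ h')
  | act h h' => exact ProperWTraceTo.act (step_subst σ h) (wtraceTo_subst σ h')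

theorem WTraceTo.subst_cases {σ : V → Tm A V} {t : Tm A V} {w : List A} {s : Tm A V}
    (h : WTraceTo (subst σ t) w s) :
    (∃ t', WTraceTo t w t' ∧ s = subst σ t') ∨
    ∃ w₁ w₂ t' x, w = w₁ ++ w₂ ∧ WTraceTo t w₁ t' ∧ x ∈ initVars t' ∧
      ProperWTraceTo (σ x) w₂ s := by
  generalize hR : subst σ t = R at h
  induction h generalizing t with
  | refl => exact Or.inl ⟨t, WTraceTo.refl t, hR.symm⟩
  | @tau r r' w s hstep htr ih =>
      subst hR
      rcases step_subst_cases hstep with ⟨t₁, ht₁, rfl⟩ | ⟨x, hx, hstepx⟩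
      · rcases ih rfl with ⟨t', htr', rfl⟩ | ⟨w₁, w₂, t', x, rfl, htr', hx, hent⟩
        · exact Or.inl ⟨t', WTraceTo.tau ht₁ htr', rfl⟩
        · exact Or.inr ⟨w₁, w₂, t', x, rfl, WTraceTo.tau ht₁ htr', hx, hent⟩
      · exact Or.inr ⟨[], w, t, x, rfl, WTraceTo.refl t, hx, ProperWTraceTo.tau hstepx htr⟩
  | @act r b r' w s hstep htr ih =>
      subst hR
      rcases step_subst_cases hstep with ⟨t₁, ht₁, rfl⟩ | ⟨x, hx, hstepx⟩
      · rcases ih rfl with ⟨t', htr', rfl⟩ | ⟨w₁, w₂, t', x, rfl, htr', hx, hent⟩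
        · exact Or.inl ⟨t', WTraceTo.act ht₁ htr', rfl⟩
        · exact Or.inr ⟨b :: w₁, w₂, t', x, rfl, WTraceTo.act ht₁ htr', hx, hent⟩
      · exact Or.inr ⟨[], b :: w, t, x, rfl, WTraceTo.refl t, hx,
          ProperWTraceTo.act hstepx htr⟩

theorem WTraceTo.exists_subst_of_no_tau {σ : V → Tm A V} {t s : Tm A V}
    (hσ : ∀ x s', ¬ Step (σ x) none s') (h : WTraceTo (subst σ t) [] s) :
    ∃ t', WTraceTo t [] t' ∧ s = subst σ t' := by
  rcases h.subst_cases with h | ⟨w₁, w₂, t', x, hw, -, -, hent⟩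
  · exact h
  · obtain ⟨-, rfl⟩ := List.append_eq_nil_iff.1 hw.symm
    exact (hent.nil_of_no_tau (hσ x)).elim

theorem nil_mem_WT (t : Tm A V) : [] ∈ WT t := ⟨t, WTraceTo.refl t⟩

theorem WT_nil : WT (nil : Tm A V) = {[]} := by
  refine Set.eq_singleton_iff_unique_mem.2 ⟨nil_mem_WT _, ?_⟩
  rintro w ⟨s, hs⟩
  rcases hs.eq_or_proper with ⟨rfl, -⟩ | hs
  · rfl
  · exact absurd hs not_properWTraceTo_nil

theorem append_mem_WT {t s : Tm A V} {w v : List A} (h : WTraceTo t w s) (hv : v ∈ WT s) :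
    w ++ v ∈ WT t :=
  let ⟨r, hr⟩ := hv
  ⟨r, wtraceTo_append h hr⟩

def chainSet (a : A) (n : ℕ) : Set (List A) := {w | ∃ i ≤ n, w = replicate i a}

theorem nil_mem_chainSet (a : A) (n : ℕ) : [] ∈ chainSet a n := ⟨0, Nat.zero_le n, rfl⟩

theorem replicate_mem_chainSet_iff {i n : ℕ} : replicate i a ∈ chainSet a n ↔ i ≤ n :=
  ⟨fun ⟨_, hj, h⟩ => List.replicate_left_inj.1 h ▸ hj, fun h => ⟨i, h, rfl⟩⟩

theorem step_npre {n : ℕ} {α : Option A} {s : Tm A V}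
    (h : Step (npre a n nil) α s) : ∃ k, n = k + 1 ∧ α = some a ∧ s = npre a k nil := by
  cases n with
  | zero => exact absurd h not_step_nil
  | succ k => cases h; exact ⟨k, rfl, rfl, rfl⟩

theorem not_step_npre_none {n : ℕ} {s : Tm A V} : ¬ Step (npre a n nil) none s := fun h => by
  obtain ⟨_, _, hα, _⟩ := step_npre h
  cases hα

theorem WTraceTo.of_npre {n : ℕ} {w : List A} {s : Tm A V}
    (h : WTraceTo (npre a n nil) w s) :
    ∃ i ≤ n, w = replicate i a ∧ s = npre a (n - i) nil := by
  generalize hR : npre a n (nil : Tm A V) = R at h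
  induction h generalizing n with
  | refl => exact ⟨0, Nat.zero_le n, rfl, by rw [← hR, Nat.sub_zero]⟩
  | tau hstep _ _ =>
      subst hR
      obtain ⟨k, rfl, hα, rfl⟩ := step_npre hstep
      cases hα
  | act hstep _ ih =>
      subst hR
      obtain ⟨k, rfl, hα, rfl⟩ := step_npre hstep
      obtain rfl := Option.some_injective _ hα
      obtain ⟨i, hi, rfl, rfl⟩ := ih rfl
      exact ⟨i + 1, by omega, List.replicate_succ.symm, by rw [Nat.add_sub_add_right]⟩

theorem ProperWTraceTo.of_npre {n : ℕ} {w : List A} {s : Tm A V}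
    (h : ProperWTraceTo (npre a n nil) w s) :
    ∃ i, 1 ≤ i ∧ i ≤ n ∧ w = replicate i a ∧ s = npre a (n - i) nil := by
  obtain ⟨i, hi, rfl, rfl⟩ := h.wtraceTo.of_npre
  rcases Nat.eq_zero_or_pos i with rfl | hpos
  · exact (h.nil_of_no_tau fun _ => not_step_npre_none).elim
  · exact ⟨i, hpos, hi, rfl, rfl⟩

theorem wtraceTo_npre_replicate {i n : ℕ} (h : i ≤ n) :
    WTraceTo (npre a n (nil : Tm A V)) (replicate i a) (npre a (n - i) nil) := by
  induction i generalizing n with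
  | zero => exact WTraceTo.refl _
  | succ i ih =>
      obtain ⟨k, rfl⟩ : ∃ k, n = k + 1 := ⟨n - 1, by omega⟩
      rw [Nat.add_sub_add_right]
      exact WTraceTo.act (Step.pre _ _) (ih (by omega))

theorem WT_npre (a : A) (n : ℕ) : WT (npre a n (nil : Tm A V)) = chainSet a n := by
  ext w
  constructor
  · rintro ⟨s, hs⟩
    obtain ⟨i, hi, rfl, -⟩ := hs.of_npre
    exact replicate_mem_chainSet_iff.2 hi
  · rintro ⟨i, hi, rfl⟩
    exact ⟨_, wtraceTo_npre_replicate hi⟩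

theorem replicate_mem_WT_npre {i n : ℕ} (h : i ≤ n) :
    replicate i a ∈ WT (npre a n (nil : Tm A V)) := by
  rw [WT_npre]; exact replicate_mem_chainSet_iff.2 h

theorem closed_npre (a : A) (n : ℕ) : Closed (npre a n (nil : Tm A V)) := by
  induction n with
  | zero => exact closed_nil
  | succ n ih => exact closed_pre_iff.2 ih

def chainSum (a : A) (m : ℕ) : Tm A V := plus (npre a m nil) (npre a (2 * m) nil)

def pTerm (a : A) (m : ℕ) : Tm A V :=
  plus (pre none (npre a (2 * m) nil)) (pre none (chainSum a m))

def qTerm (a : A) (m : ℕ) : Tm A V := pre none (chainSum a m)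

theorem closed_qTerm (a : A) (m : ℕ) : Closed (qTerm a m : Tm A V) :=
  closed_plus_iff.2 ⟨closed_npre a m, closed_npre a (2 * m)⟩

theorem closed_pTerm (a : A) (m : ℕ) : Closed (pTerm a m : Tm A V) :=
  closed_plus_iff.2 ⟨closed_npre a (2 * m), closed_qTerm a m⟩

theorem WTraceTo.of_chainSum {w : List A} {s : Tm A V} (h : WTraceTo (chainSum a m) w s) :
    (w = [] ∧ s = chainSum a m) ∨ ∃ i, 1 ≤ i ∧ w = replicate i a ∧
      (i ≤ m ∧ s = npre a (m - i) nil ∨ i ≤ 2 * m ∧ s = npre a (2 * m - i) nil) := by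
  refine h.eq_or_proper.imp_right fun h => ?_
  rcases h.plus_cases with h | h <;> obtain ⟨i, hi, hin, rfl, rfl⟩ := h.of_npre
  · exact ⟨i, hi, rfl, Or.inl ⟨hin, rfl⟩⟩
  · exact ⟨i, hi, rfl, Or.inr ⟨hin, rfl⟩⟩

theorem wtraceTo_chainSum_left {i : ℕ} (h₁ : 1 ≤ i) (h₂ : i ≤ m) :
    WTraceTo (chainSum a m : Tm A V) (replicate i a) (npre a (m - i) nil) :=
  ((wtraceTo_npre_replicate h₂).proper_of_ne_nil (by simp; omega)).plus_left _ |>.wtraceTo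

theorem wtraceTo_chainSum_right {i : ℕ} (h₁ : 1 ≤ i) (h₂ : i ≤ 2 * m) :
    WTraceTo (chainSum a m : Tm A V) (replicate i a) (npre a (2 * m - i) nil) :=
  ((wtraceTo_npre_replicate h₂).proper_of_ne_nil (by simp; omega)).plus_right _ |>.wtraceTo

theorem WTraceTo.of_pTerm {w : List A} {s : Tm A V} (h : WTraceTo (pTerm a m) w s) :
    (w = [] ∧ s = pTerm a m) ∨ WTraceTo (npre a (2 * m) nil) w s ∨
      WTraceTo (chainSum a m) w s :=
  h.eq_or_proper.imp_right fun h =>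
    h.plus_cases.imp properWTraceTo_pre_none_iff.1 properWTraceTo_pre_none_iff.1

theorem wtraceTo_pTerm_of_chainSum {w : List A} {s : Tm A V}
    (h : WTraceTo (chainSum a m) w s) : WTraceTo (pTerm a m) w s :=
  (properWTraceTo_pre_none_iff.2 h).plus_right _ |>.wtraceTo

theorem wtraceTo_qTerm_of_chainSum {w : List A} {s : Tm A V}
    (h : WTraceTo (chainSum a m) w s) : WTraceTo (qTerm a m) w s :=
  WTraceTo.tau (Step.pre _ _) h

theorem WT_chainSum : WT (chainSum a m : Tm A V) = chainSet a (2 * m) := by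
  ext w
  constructor
  · rintro ⟨s, hs⟩
    rcases hs.of_chainSum with ⟨rfl, -⟩ | ⟨i, -, rfl, ⟨hi, -⟩ | ⟨hi, -⟩⟩
    · exact nil_mem_chainSet a _
    · exact replicate_mem_chainSet_iff.2 (by omega)
    · exact replicate_mem_chainSet_iff.2 hi
  · rintro ⟨i, hi, rfl⟩
    rcases Nat.eq_zero_or_pos i with rfl | hpos
    · exact nil_mem_WT _
    · exact ⟨_, wtraceTo_chainSum_right hpos hi⟩

theorem WT_pTerm : WT (pTerm a m : Tm A V) = chainSet a (2 * m) := by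
  refine Set.Subset.antisymm (fun w ⟨s, hs⟩ => ?_) fun w hw => ?_
  · rcases hs.of_pTerm with ⟨rfl, -⟩ | hs | hs
    · exact nil_mem_chainSet a _
    · rw [← WT_npre]; exact ⟨s, hs⟩
    · rw [← WT_chainSum]; exact ⟨s, hs⟩
  · rw [← WT_chainSum] at hw
    obtain ⟨s, hs⟩ := hw
    exact ⟨s, wtraceTo_pTerm_of_chainSum hs⟩

theorem WT_qTerm : WT (qTerm a m : Tm A V) = chainSet a (2 * m) := by
  refine Set.Subset.antisymm (fun w ⟨s, hs⟩ => ?_) fun w hw => ?_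
  · rcases hs.of_pre_none with ⟨rfl, -⟩ | hs
    · exact nil_mem_chainSet a _
    · rw [← WT_chainSum]; exact ⟨s, hs⟩
  · rw [← WT_chainSum] at hw
    obtain ⟨s, hs⟩ := hw
    exact ⟨s, wtraceTo_qTerm_of_chainSum hs⟩

theorem WTraceTo.of_pTerm_replicate {j : ℕ} {s : Tm A V}
    (h : WTraceTo (pTerm a m) (replicate j a) s) (hj : 1 ≤ j) :
    s = npre a (2 * m - j) nil ∨ j ≤ m ∧ s = npre a (m - j) nil := by
  have hne : replicate j a ≠ [] := by simp; omega
  rcases h.of_pTerm with ⟨h, -⟩ | h | h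
  · exact absurd h hne
  · obtain ⟨i, -, hw, rfl⟩ := h.of_npre
    obtain rfl := List.replicate_left_inj.1 hw
    exact Or.inl rfl
  · rcases h.of_chainSum with ⟨h, -⟩ | ⟨i, -, hw, ⟨hi, rfl⟩ | ⟨-, rfl⟩⟩
    · exact absurd h hne
    · obtain rfl := List.replicate_left_inj.1 hw
      exact Or.inr ⟨hi, rfl⟩
    · obtain rfl := List.replicate_left_inj.1 hw
      exact Or.inl rfl

theorem replicate_mem_WT_of_pTerm_tau {s : Tm A V} (h : WTraceTo (pTerm a m) [] s) :
    replicate (2 * m) a ∈ WT s := by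
  rcases h.of_pTerm with ⟨-, rfl⟩ | h | h
  · rw [WT_pTerm]; exact replicate_mem_chainSet_iff.2 le_rfl
  · obtain ⟨i, -, hw, rfl⟩ := h.of_npre
    obtain rfl : i = 0 := (List.replicate_eq_nil_iff a).1 hw.symm
    exact replicate_mem_WT_npre le_rfl
  · rcases h.of_chainSum with ⟨-, rfl⟩ | ⟨i, hi, hw, -⟩
    · rw [WT_chainSum]; exact replicate_mem_chainSet_iff.2 le_rfl
    · simp at hw; omega

theorem WIFle.trans {p q r : Tm A V} (h₁ : WIFle p q) (h₂ : WIFle q r) : WIFle p r :=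
  ⟨fun w B h => h₂.1 w B (h₁.1 w B h), h₁.2.1.trans h₂.2.1,
    fun h => h₂.2.2 (h₁.2.2 h)⟩

theorem WIFle.refl (p : Tm A V) : WIFle p p := ⟨fun _ _ h => h, rfl, id⟩

theorem WIFeq.refl (p : Tm A V) : WIFeq p p := ⟨WIFle.refl p, WIFle.refl p⟩

theorem WIFeq.symm {p q : Tm A V} (h : WIFeq p q) : WIFeq q p := ⟨h.2, h.1⟩

theorem WIFeq.trans {p q r : Tm A V} (h₁ : WIFeq p q) (h₂ : WIFeq q r) : WIFeq p r :=
  ⟨h₁.1.trans h₂.1, h₂.2.trans h₁.2⟩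

theorem WIFle.mem_WT_of_forall {r p x : Tm A V} {w v : List A} (h : WIFle r p)
    (hp : ∀ s, WTraceTo p w s → v ∈ WT s) (hx : WTraceTo r w x) : v ∈ WT x := by
  by_contra hv
  obtain ⟨s, hs, hB⟩ := h.1 w {v} ⟨x, hx, fun u hu (hmem : u = v) => hv (hmem ▸ hu)⟩
  exact hB v (hp s hs) rfl

theorem wifle_of_forall_wtraceTo {p q : Tm A V} (hWT : WT p = WT q)
    (hτ : (∃ p', Step p none p') → ∃ q', Step q none q')
    (h : ∀ w s, WTraceTo p w s → ∃ s', WTraceTo q w s' ∧ WT s' ⊆ WT s) : WIFle p q := by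
  refine ⟨fun w B ⟨s, hs, hB⟩ => ?_, hWT, hτ⟩
  obtain ⟨s', hs', hsub⟩ := h w s hs
  exact ⟨s', hs', fun v hv => hB v (hsub hv)⟩

theorem wifeq_pTerm_qTerm (a : A) (m : ℕ) : WIFeq (pTerm a m : Tm A V) (qTerm a m) := by
  have hWT : WT (pTerm a m : Tm A V) = WT (qTerm a m : Tm A V) := by rw [WT_pTerm, WT_qTerm]
  constructor
  · refine wifle_of_forall_wtraceTo hWT (fun _ => ⟨_, Step.pre _ _⟩) fun w s hs => ?_
    rcases hs.of_pTerm with ⟨rfl, rfl⟩ | hs | hs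
    · exact ⟨_, WTraceTo.refl _, hWT.ge⟩
    · obtain ⟨i, hi, rfl, rfl⟩ := hs.of_npre
      rcases Nat.eq_zero_or_pos i with rfl | hpos
      · exact ⟨_, WTraceTo.refl _, by rw [WT_qTerm, WT_npre, Nat.sub_zero]⟩
      · exact ⟨_, wtraceTo_qTerm_of_chainSum (wtraceTo_chainSum_right hpos hi), le_rfl⟩
    · exact ⟨s, wtraceTo_qTerm_of_chainSum hs, le_rfl⟩
  · refine wifle_of_forall_wtraceTo hWT.symm
      (fun _ => ⟨_, Step.plusL _ (Step.pre _ _)⟩) fun w s hs => ?_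
    rcases hs.of_pre_none with ⟨rfl, rfl⟩ | hs
    · exact ⟨_, WTraceTo.refl _, hWT.le⟩
    · exact ⟨s, wtraceTo_pTerm_of_chainSum hs, le_rfl⟩

def Resilient (a : A) (m : ℕ) (x : Tm A V) : Prop :=
  replicate (2 * m) a ∈ WT x ∧ ∀ s, WTraceTo x (replicate m a) s → replicate m a ∈ WT s

def TauResilient (a : A) (m : ℕ) (x : Tm A V) : Prop :=
  ∃ x', WTraceTo x [] x' ∧ Resilient a m x'

def ProperTauResilient (a : A) (m : ℕ) (x : Tm A V) : Prop :=
  ∃ x', ProperWTraceTo x [] x' ∧ Resilient a m x'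

theorem ProperTauResilient.tauResilient {x : Tm A V} (h : ProperTauResilient a m x) :
    TauResilient a m x :=
  let ⟨x', hx', hr⟩ := h
  ⟨x', hx'.wtraceTo, hr⟩

theorem ProperTauResilient.of_wtraceTo {x y : Tm A V} (hxy : WTraceTo x [] y)
    (hy : ProperTauResilient a m y) : ProperTauResilient a m x := by
  obtain ⟨y', hy', hr⟩ := hy
  rcases hxy.eq_or_proper with ⟨-, rfl⟩ | hxy
  · exact ⟨y', hy', hr⟩
  · exact ⟨y', hxy.append hy'.wtraceTo, hr⟩

theorem Resilient.of_wifle {x y : Tm A V} (h : WIFle y x) (hx : Resilient a m x) :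
    Resilient a m y :=
  ⟨by rw [h.2.1]; exact hx.1, fun _ hs => h.mem_WT_of_forall hx.2 hs⟩

theorem properTauResilient_pTerm (a : A) (m : ℕ) :
    ProperTauResilient a m (pTerm a m : Tm A V) := by
  refine ⟨_, (properWTraceTo_pre_none_iff.2 (WTraceTo.refl _)).plus_left _,
    replicate_mem_WT_npre le_rfl, fun s hs => ?_⟩
  obtain ⟨i, -, hw, rfl⟩ := hs.of_npre
  obtain rfl : m = i := List.replicate_left_inj.1 hw
  exact replicate_mem_WT_npre (by omega)

theorem not_tauResilient_qTerm (hm : 1 ≤ m) : ¬ TauResilient a m (qTerm a m : Tm A V) := by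
  rintro ⟨x, hx, -, hr⟩
  have hdead : WTraceTo x (replicate m a) (nil : Tm A V) := by
    have h := wtraceTo_chainSum_left (a := a) (V := V) hm le_rfl
    rw [Nat.sub_self] at h
    rcases hx.of_pre_none with ⟨-, rfl⟩ | hx
    · exact wtraceTo_qTerm_of_chainSum h
    · rcases hx.of_chainSum with ⟨-, rfl⟩ | ⟨i, hi, hw, -⟩
      · exact h
      · simp at hw; omega
  have := hr nil hdead
  rw [WT_nil, Set.mem_singleton_iff, List.replicate_eq_nil_iff] at this
  omega

/-- What the proper weak derivatives of `pTerm a m` look like; unlike `≃ pTerm a m`, this passes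
to summands and to bodies of `τ`-prefixes. -/
def PShaped (a : A) (m : ℕ) (r : Tm A V) : Prop :=
  ∀ w s, ProperWTraceTo r w s → w ∈ chainSet a (2 * m) ∧
    (w = [] → replicate (2 * m) a ∈ WT s) ∧
    ∀ j, 1 ≤ j → w = replicate j a →
      replicate (m - j) a ∈ WT s ∧ (m < j → replicate (2 * m - j) a ∈ WT s)

theorem pShaped_of_wifle {r : Tm A V} (h : WIFle r (pTerm a m)) : PShaped a m r := by
  intro w s hs
  refine ⟨?_, ?_, ?_⟩
  · rw [← WT_pTerm, ← h.2.1]; exact ⟨s, hs.wtraceTo⟩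
  · rintro rfl
    exact h.mem_WT_of_forall (fun _ => replicate_mem_WT_of_pTerm_tau) hs.wtraceTo
  · rintro j hj rfl
    refine ⟨h.mem_WT_of_forall (fun s' hs' => ?_) hs.wtraceTo,
      fun hmj => h.mem_WT_of_forall (fun s' hs' => ?_) hs.wtraceTo⟩
    · rcases hs'.of_pTerm_replicate hj with rfl | ⟨-, rfl⟩ <;>
        exact replicate_mem_WT_npre (by omega)
    · rcases hs'.of_pTerm_replicate hj with rfl | ⟨hjm, -⟩
      · exact replicate_mem_WT_npre le_rfl
      · omega

namespace PShaped

variable {r x v : Tm A V}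

theorem plus_left (h : PShaped a m (plus x v)) : PShaped a m x :=
  fun w s hs => h w s (hs.plus_left v)

theorem plus_right (h : PShaped a m (plus v x)) : PShaped a m x :=
  fun w s hs => h w s (hs.plus_right v)

theorem of_pre_none (h : PShaped a m (pre none x)) : PShaped a m x :=
  fun w s hs => h w s (properWTraceTo_pre_none_iff.2 hs.wtraceTo)

theorem mem_chainSet (h : PShaped a m r) {w : List A} (hw : w ∈ WT r) :
    w ∈ chainSet a (2 * m) := by
  obtain ⟨s, hs⟩ := hw
  rcases hs.eq_or_proper with ⟨rfl, -⟩ | hs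
  · exact nil_mem_chainSet a _
  · exact (h w s hs).1

/-- If `s` could perform an action, it would be `a`, leading to an `a^(m+1)`-derivative, which
can still perform `a^(m-1)`. -/
theorem WT_eq_singleton_nil (hm : 1 ≤ m) (h : PShaped a m r) {s : Tm A V}
    (hs : WTraceTo r (replicate m a) s) (hnot : replicate m a ∉ WT s) : WT s = {[]} := by
  refine Set.eq_singleton_iff_unique_mem.2 ⟨nil_mem_WT s, fun w hw => ?_⟩
  by_contra hne
  obtain ⟨b, w', rfl⟩ := List.exists_cons_of_ne_nil hne
  obtain rfl : b = a := by
    obtain ⟨i, -, hi⟩ := h.mem_chainSet (append_mem_WT hs hw)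
    exact List.eq_of_mem_replicate (hi ▸ List.mem_append_right _ List.mem_cons_self)
  obtain ⟨r', hr'⟩ := hw
  obtain ⟨s₁, hs₁, -⟩ := (show WTraceTo s ([b] ++ w') r' from hr').exists_of_append
  have hrs₁ := wtraceTo_append hs hs₁
  rw [← List.replicate_succ'] at hrs₁
  have hmem := ((h _ _ (hrs₁.proper_of_ne_nil (by simp))).2.2 (m + 1) (by omega) rfl).2
    (by omega)
  have hrep : [b] ++ replicate (2 * m - (m + 1)) b = replicate m b := by
    rw [List.singleton_append, ← List.replicate_succ]
    congr 1
    omega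
  exact hnot (hrep ▸ append_mem_WT hs₁ hmem)

theorem eq_of_WT_eq_singleton_nil (h : PShaped a m r) {j : ℕ} {s : Tm A V}
    (hs : WTraceTo r (replicate j a) s) (hj : 1 ≤ j) (hj₂ : j < 2 * m) (hdead : WT s = {[]}) :
    j = m := by
  obtain ⟨h₁, h₂⟩ := (h _ s (hs.proper_of_ne_nil (by simp; omega))).2.2 j hj rfl
  rw [hdead, Set.mem_singleton_iff, List.replicate_eq_nil_iff] at h₁
  by_contra hne
  have h₃ := h₂ (by omega)
  rw [hdead, Set.mem_singleton_iff, List.replicate_eq_nil_iff] at h₃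
  omega

end PShaped

def InitVarAt (a : A) (t : Tm A V) (k : ℕ) (y : V) : Prop :=
  ∃ t', WTraceTo t (replicate k a) t' ∧ y ∈ initVars t'

/-- `σ y`, entered after `a^k`, can reach a state unable to complete `a^m`. -/
def Defective (a : A) (m : ℕ) (σ : V → Tm A V) (y : V) (k : ℕ) : Prop :=
  ∃ s, WTraceTo (σ y) (replicate (m - k) a) s ∧ replicate m a ∉ WT s

def Dirty (a : A) (m : ℕ) (σ : V → Tm A V) (t u : Tm A V) (y : V) : Prop :=
  ∃ k < m, (InitVarAt a t k y ∨ InitVarAt a u k y) ∧ Defective a m σ y k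

theorem InitVarAt.of_wtraceTo {t t₁ : Tm A V} {k : ℕ} {y : V} (ht : WTraceTo t [] t₁)
    (h : InitVarAt a t₁ k y) : InitVarAt a t k y :=
  let ⟨t₂, h₂, hy⟩ := h
  ⟨t₂, wtraceTo_append ht h₂, hy⟩

theorem InitVarAt.wtraceTo_subst_add {σ : V → Tm A V} {v s : Tm A V} {k l : ℕ} {y : V}
    (h : InitVarAt a v k y) (hl : 1 ≤ l) (hs : WTraceTo (σ y) (replicate l a) s) :
    WTraceTo (subst σ v) (replicate (k + l) a) s := by
  obtain ⟨v', hv', hy⟩ := h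
  rw [List.replicate_add]
  exact wtraceTo_append (wtraceTo_subst σ hv')
    ((hs.proper_of_ne_nil (by simp; omega)).subst_of_mem_initVars hy).wtraceTo

theorem InitVarAt.wtraceTo_subst_sub {σ : V → Tm A V} {v s : Tm A V} {k : ℕ} {y : V}
    (h : InitVarAt a v k y) (hk : k < m) (hs : WTraceTo (σ y) (replicate (m - k) a) s) :
    WTraceTo (subst σ v) (replicate m a) s := by
  simpa [Nat.add_sub_cancel' hk.le] using h.wtraceTo_subst_add (by omega) hs

theorem Resilient.not_defective {σ : V → Tm A V} {t₁ : Tm A V} {k : ℕ} {y : V}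
    (hr : Resilient a m (subst σ t₁)) (hk : k < m) (hy : InitVarAt a t₁ k y) :
    ¬ Defective a m σ y k :=
  fun ⟨s, hs, hnot⟩ => hnot (hr.2 s (hy.wtraceTo_subst_sub hk hs))

theorem PShaped.dead_of_defective {σ : V → Tm A V} {v : Tm A V} {k : ℕ} {y : V}
    (hm : 1 ≤ m) (hG : PShaped a m (subst σ v)) (hy : InitVarAt a v k y) (hk : k < m)
    (hd : Defective a m σ y k) :
    ∃ s, WTraceTo (σ y) (replicate (m - k) a) s ∧ WT s = {[]} :=
  let ⟨s, hs, hnot⟩ := hd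
  ⟨s, hs, hG.WT_eq_singleton_nil hm (hy.wtraceTo_subst_sub hk hs) hnot⟩

/-- A defect at a depth `k₀ ≠ k` would be a dead end, which would put a dead end of `σ t` at
depth `k + m - k₀ ≠ m`. -/
theorem Resilient.not_dirty {σ : V → Tm A V} {t u t₁ : Tm A V} {k : ℕ} {y : V} (hm : 1 ≤ m)
    (hGt : PShaped a m (subst σ t)) (hGu : PShaped a m (subst σ u)) (ht₁ : WTraceTo t [] t₁)
    (hr : Resilient a m (subst σ t₁)) (hk : k < m) (hy : InitVarAt a t₁ k y) :
    ¬ Dirty a m σ t u y := by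
  rintro ⟨k₀, hk₀, hside, hd⟩
  obtain ⟨s, hs, hdead⟩ := hside.elim (hGt.dead_of_defective hm · hk₀ hd)
    (hGu.dead_of_defective hm · hk₀ hd)
  have := hGt.eq_of_WT_eq_singleton_nil ((hy.of_wtraceTo ht₁).wtraceTo_subst_add (by omega) hs)
    (by omega) (by omega) hdead
  obtain rfl : k = k₀ := by omega
  exact hr.not_defective hk hy hd

theorem replicate_mem_WT_of_not_defective {σ : V → Tm A V} {v s : Tm A V}
    (hv : wdepth v < m) (hclean : ∀ k y, k < m → InitVarAt a v k y → ¬ Defective a m σ y k)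
    (hs : WTraceTo (subst σ v) (replicate m a) s) : replicate m a ∈ WT s := by
  rcases hs.subst_cases with ⟨v', hv', -⟩ | ⟨w₁, w₂, v₂, y, hw, hv₂, hy, hent⟩
  · have := hv'.length_le_wdepth
    simp only [List.length_replicate] at this
    omega
  · obtain ⟨hlen, h₁, h₂⟩ := List.append_eq_replicate_iff.1 hw.symm
    have hk : w₁.length < m := by have := hv₂.length_le_wdepth; omega
    by_contra hnot
    refine hclean _ y hk ⟨v₂, h₁ ▸ hv₂, hy⟩ ⟨s, ?_, hnot⟩
    rw [show m - w₁.length = w₂.length by omega, ← h₂]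
    exact hent.wtraceTo

theorem properTauResilient_subst_of_not_defective {σ : V → Tm A V} {u u₁ : Tm A V}
    (hu : wdepth u < m) (hGu : PShaped a m (subst σ u)) (hτ : ∃ r, Step (subst σ u) none r)
    (hu₁ : WTraceTo u [] u₁)
    (hclean : ∀ k y, k < m → InitVarAt a u₁ k y → ¬ Defective a m σ y k) :
    ProperTauResilient a m (subst σ u) := by
  rcases hu₁.eq_or_proper with ⟨-, rfl⟩ | hu₁
  · obtain ⟨r, hr⟩ := hτ
    have hr' : ProperWTraceTo (subst σ u₁) [] r := ProperWTraceTo.tau hr (WTraceTo.refl r)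
    exact ⟨r, hr', (hGu _ _ hr').2.1 rfl, fun s hs =>
      replicate_mem_WT_of_not_defective hu hclean (WTraceTo.tau hr hs)⟩
  · have hu₁' := properWTraceTo_subst σ hu₁
    exact ⟨_, hu₁', (hGu _ _ hu₁').2.1 rfl, fun s hs => replicate_mem_WT_of_not_defective
      (lt_of_le_of_lt hu₁.wtraceTo.wdepth_le hu) hclean hs⟩

open Classical in
noncomputable def probe (r : Tm A V) (D : V → Prop) (y : V) : Tm A V := if D y then r else nil

section Probe

variable {r : Tm A V} {D : V → Prop} {y : V}

theorem probe_of_pos (hy : D y) : probe r D y = r := if_pos hy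

theorem probe_of_neg (hy : ¬ D y) : probe r D y = nil := if_neg hy

theorem closedSub_probe (hr : Closed r) : ClosedSub (probe r D) := fun y => by
  by_cases hy : D y
  · rw [probe_of_pos hy]; exact hr
  · rw [probe_of_neg hy]; exact closed_nil

theorem not_properWTraceTo_probe (hy : ¬ D y) {w : List A} {s : Tm A V} :
    ¬ ProperWTraceTo (probe r D y) w s := by
  rw [probe_of_neg hy]; exact not_properWTraceTo_nil

theorem length_le_of_mem_WT_subst_probe {t : Tm A V} {w : List A}
    (ht : ∀ w t' y, WTraceTo t w t' → y ∈ initVars t' → ¬ D y)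
    (hw : w ∈ WT (subst (probe r D) t)) : w.length ≤ wdepth t := by
  obtain ⟨s, hs⟩ := hw
  rcases hs.subst_cases with ⟨t', ht', -⟩ | ⟨w₁, w₂, t', y, -, ht', hy, hent⟩
  · exact ht'.length_le_wdepth
  · exact absurd hent (not_properWTraceTo_probe (ht _ _ _ ht' hy))

theorem not_step_probe_npre_none {n : ℕ} {s : Tm A V} :
    ¬ Step (probe (npre a n nil) D y) none s := fun h => by
  by_cases hy : D y
  · rw [probe_of_pos hy] at h
    exact not_step_npre_none h
  · rw [probe_of_neg hy] at h
    exact not_step_nil h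

theorem wtraceTo_probe_npre {n : ℕ} (hy : D y) :
    WTraceTo (probe (npre a n nil) D y) (replicate n a) nil := by
  rw [probe_of_pos hy]
  simpa [npre] using wtraceTo_npre_replicate (a := a) (V := V) (le_refl n)

end Probe

/-- Substitute `a^(5m) 0` for the dirty variables and `0` for the others: `t₁` becomes a state
without traces of length `4m`, so its counterpart on the `u`-side is `ρ u₁` for a `τ`-derivative
`u₁` of `u` meeting no dirty variable, and then `σ u₁` (or, if `u₁ = u`, a `τ`-successor of
`σ u`) is resilient. -/
theorem properTauResilient_subst_of_resilient {σ : V → Tm A V} {t u t₁ : Tm A V}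
    (hm : 1 ≤ m) (ht : wdepth t < m) (hu : wdepth u < m)
    (hsound : ∀ ρ, ClosedSub ρ → WIFle (subst ρ t) (subst ρ u))
    (hGt : PShaped a m (subst σ t)) (hGu : PShaped a m (subst σ u))
    (hτ : ∃ r, Step (subst σ u) none r) (ht₁ : WTraceTo t [] t₁)
    (hr : Resilient a m (subst σ t₁)) : ProperTauResilient a m (subst σ u) := by
  set ρ := probe (npre a (5 * m) nil) (Dirty a m σ t u)
  have hshort : ∀ w ∈ WT (subst ρ t₁), w.length < 4 * m := by
    refine fun w hw => lt_of_le_of_lt (length_le_of_mem_WT_subst_probe (fun w t₂ y h₂ hy => ?_)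
      hw) (by have := ht₁.wdepth_le; omega)
    obtain ⟨k, -, rfl⟩ := hGt.mem_chainSet ⟨_, wtraceTo_append (wtraceTo_subst σ ht₁)
      (wtraceTo_subst σ h₂)⟩
    have := h₂.length_add_wdepth_le
    have := ht₁.wdepth_le
    simp only [List.length_replicate] at *
    exact hr.not_dirty hm hGt hGu ht₁ (by omega) ⟨t₂, h₂, hy⟩
  obtain ⟨x, hx, hB⟩ := (hsound ρ (closedSub_probe (closed_npre a _))).1 []
    {w | 4 * m ≤ w.length} ⟨_, wtraceTo_subst ρ ht₁, fun w hw => (hshort w hw).not_ge⟩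
  obtain ⟨u₁, hu₁, rfl⟩ := hx.exists_subst_of_no_tau fun _ _ => not_step_probe_npre_none
  refine properTauResilient_subst_of_not_defective hu hGu hτ hu₁ fun k y hk hy hd => ?_
  have hD : Dirty a m σ t u y := ⟨k, hk, Or.inr (hy.of_wtraceTo hu₁), hd⟩
  have hlong := hy.wtraceTo_subst_add (by omega) (wtraceTo_probe_npre (a := a) (n := 5 * m) hD)
  exact hB _ ⟨_, hlong⟩ (show 4 * m ≤ (replicate (k + 5 * m) a).length by simp; omega)

/-- Substitute `τ a^n 0` for `x` and `0` for all other variables, with `n` beyond the weak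
depth of `u`, and compare the impossible futures after `a^n`. -/
theorem exists_wtraceTo_initVar_of_wifle (a : A) {t u t₂ : Tm A V} {x : V}
    (hsound : ∀ ρ, ClosedSub ρ → WIFle (subst ρ t) (subst ρ u))
    (ht₂ : WTraceTo t [] t₂) (hx : x ∈ initVars t₂) :
    ∃ u₂, WTraceTo u [] u₂ ∧ x ∈ initVars u₂ := by
  set n := wdepth u + 1
  set ρ := probe (pre none (npre a n nil)) (· = x)
  have hρx : ρ x = pre none (npre a n nil) := probe_of_pos rfl
  have htn : WTraceTo (subst ρ t) (replicate n a) nil := by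
    have h : ProperWTraceTo (ρ x) (replicate n a) nil := by
      rw [hρx, properWTraceTo_pre_none_iff]
      simpa [npre] using wtraceTo_npre_replicate (a := a) (V := V) (le_refl n)
    exact wtraceTo_append (wtraceTo_subst ρ ht₂) (h.subst_of_mem_initVars hx).wtraceTo
  obtain ⟨x', hx', hB⟩ := (hsound ρ (closedSub_probe (closed_npre a n))).1 _ {w | w ≠ []}
    ⟨nil, htn, fun w hw hne => hne (by rwa [WT_nil] at hw)⟩
  rcases hx'.subst_cases with ⟨u', hu', -⟩ | ⟨w₁, w₂, u₂, y, hw, hu₂, hy, hent⟩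
  · have := hu'.length_le_wdepth
    simp only [List.length_replicate] at this
    omega
  · obtain rfl : y = x := by_contra fun hne => not_properWTraceTo_probe hne hent
    rw [hρx, properWTraceTo_pre_none_iff] at hent
    obtain ⟨i, -, rfl, rfl⟩ := hent.of_npre
    have hi : n - i = 0 := by_contra fun h =>
      hB _ (replicate_mem_WT_npre le_rfl) (by simpa using h)
    have hlen := congrArg List.length hw
    have := hu₂.length_le_wdepth
    simp only [List.length_append, List.length_replicate] at hlen
    obtain rfl : w₁ = [] := List.eq_nil_of_length_eq_zero (by omega)
    exact ⟨u₂, hu₂, hy⟩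

theorem ProperTauResilient.subst_of_wifle {σ : V → Tm A V} {t u : Tm A V}
    (hm : 1 ≤ m) (ht : wdepth t < m) (hu : wdepth u < m) (hσ : ClosedSub σ)
    (hsound : ∀ ρ, ClosedSub ρ → WIFle (subst ρ t) (subst ρ u))
    (hGt : PShaped a m (subst σ t)) (hGu : PShaped a m (subst σ u))
    (h : ProperTauResilient a m (subst σ t)) : ProperTauResilient a m (subst σ u) := by
  obtain ⟨r, hr, hres⟩ := h
  rcases hr.wtraceTo.subst_cases with
    ⟨t₁, ht₁, rfl⟩ | ⟨w₁, w₂, t₂, x, hw, ht₂, hx, hent⟩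
  · have hτ : ∃ r, Step (subst σ u) none r := by
      refine (hsound σ hσ).2.2 ?_
      cases hr with
      | tau h _ => exact ⟨_, h⟩
    exact properTauResilient_subst_of_resilient hm ht hu hsound hGt hGu hτ ht₁ hres
  · obtain ⟨rfl, rfl⟩ := List.append_eq_nil_iff.1 hw.symm
    obtain ⟨u₂, hu₂, hxu⟩ := exists_wtraceTo_initVar_of_wifle a hsound ht₂ hx
    exact ProperTauResilient.of_wtraceTo (wtraceTo_subst σ hu₂)
      ⟨r, hent.subst_of_mem_initVars hxu, hres⟩

inductive Ctx (A V : Type) : Type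
  | hole : Ctx A V
  | plusL : Ctx A V → Tm A V → Ctx A V
  | plusR : Tm A V → Ctx A V → Ctx A V
  | pre : Option A → Ctx A V → Ctx A V

namespace Ctx

def fill : Ctx A V → Tm A V → Tm A V
  | hole, x => x
  | plusL C v, x => plus (C.fill x) v
  | plusR v C, x => plus v (C.fill x)
  | pre α C, x => Tm.pre α (C.fill x)

def comp : Ctx A V → Ctx A V → Ctx A V
  | hole, D => D
  | plusL C v, D => plusL (C.comp D) v
  | plusR v C, D => plusR v (C.comp D)
  | pre α C, D => pre α (C.comp D)

theorem fill_comp (C D : Ctx A V) (x : Tm A V) : (C.comp D).fill x = C.fill (D.fill x) := by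
  induction C with
  | hole => rfl
  | plusL C v ih | plusR v C ih | pre α C ih => simp only [comp, fill, ih]

theorem deriv_fill {R : Tm A V → Tm A V → Prop} {x y : Tm A V} (C : Ctx A V)
    (h : Deriv R x y) : Deriv R (C.fill x) (C.fill y) := by
  induction C with
  | hole => exact h
  | plusL C v ih => exact Deriv.plus ih (Deriv.refl v)
  | plusR v C ih => exact Deriv.plus (Deriv.refl v) ih
  | pre α C ih => exact Deriv.pre α ih

/-- A `τ`-step of `τ.C[P]` is either the prefix itself, where the resilient state is `C[P]` and
transfers to `C[Q]` by soundness, or a `τ`-step of `C[P]`. -/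
theorem properTauResilient_fill {P Q : Tm A V}
    (hroot : PShaped a m P → PShaped a m Q → ProperTauResilient a m P →
      ProperTauResilient a m Q)
    (hsound : ∀ C : Ctx A V, Closed (C.fill P) → Closed (C.fill Q) →
      WIFle (C.fill Q) (C.fill P))
    (C : Ctx A V) (hP : Closed (C.fill P)) (hQ : Closed (C.fill Q))
    (hGP : PShaped a m (C.fill P)) (hGQ : PShaped a m (C.fill Q))
    (h : ProperTauResilient a m (C.fill P)) : ProperTauResilient a m (C.fill Q) := by
  induction C with
  | hole => exact hroot hGP hGQ h
  | plusL C v ih =>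
      obtain ⟨x, hx, hres⟩ := h
      rcases hx.plus_cases with hx | hx
      · obtain ⟨y, hy, hres'⟩ := ih (closed_plus_iff.1 hP).1 (closed_plus_iff.1 hQ).1
          hGP.plus_left hGQ.plus_left ⟨x, hx, hres⟩
        exact ⟨y, hy.plus_left v, hres'⟩
      · exact ⟨x, hx.plus_right _, hres⟩
  | plusR v C ih =>
      obtain ⟨x, hx, hres⟩ := h
      rcases hx.plus_cases with hx | hx
      · exact ⟨x, hx.plus_left _, hres⟩
      · obtain ⟨y, hy, hres'⟩ := ih (closed_plus_iff.1 hP).2 (closed_plus_iff.1 hQ).2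
          hGP.plus_right hGQ.plus_right ⟨x, hx, hres⟩
        exact ⟨y, hy.plus_right v, hres'⟩
  | pre α C ih =>
      obtain ⟨x, hx, hres⟩ := h
      cases α with
      | some b => exact (hx.nil_of_no_tau nofun).elim
      | none =>
          rcases (properWTraceTo_pre_none_iff.1 hx).eq_or_proper with ⟨-, rfl⟩ | hx
          · exact ⟨_, properWTraceTo_pre_none_iff.2 (WTraceTo.refl _),
              hres.of_wifle (hsound C hP hQ)⟩
          · obtain ⟨y, hy, hres'⟩ := ih hP hQ hGP.of_pre_none hGQ.of_pre_none ⟨x, hx, hres⟩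
            exact ⟨y, properWTraceTo_pre_none_iff.2 hy.wtraceTo, hres'⟩

end Ctx

theorem deriv_subst_of_mem {R : Tm A V → Tm A V → Prop} {t u : Tm A V} (σ : V → Tm A V)
    (h : R t u ∨ R u t) : Deriv R (subst σ t) (subst σ u) :=
  h.elim (Deriv.inst σ) fun h => (Deriv.inst σ h).symm

def ClosedOneStep (R : Tm A V → Tm A V → Prop) (r r' : Tm A V) : Prop :=
  Closed r ∧ Closed r' ∧ ∃ (C : Ctx A V) (t u : Tm A V) (σ : V → Tm A V),
    ClosedSub σ ∧ (R t u ∨ R u t) ∧ r = C.fill (subst σ t) ∧ r' = C.fill (subst σ u)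

namespace ClosedOneStep

variable {R : Tm A V → Tm A V → Prop} {r r' : Tm A V}

theorem symm (h : ClosedOneStep R r r') : ClosedOneStep R r' r :=
  let ⟨hr, hr', C, t, u, σ, hσ, htu, h₁, h₂⟩ := h
  ⟨hr', hr, C, u, t, σ, hσ, htu.symm, h₂, h₁⟩

instance : Std.Symm (ClosedOneStep R) := ⟨fun _ _ => symm⟩

theorem fill (D : Ctx A V) (hD : ∀ x, Closed x → Closed (D.fill x))
    (h : ClosedOneStep R r r') : ClosedOneStep R (D.fill r) (D.fill r') := by
  obtain ⟨hr, hr', C, t, u, σ, hσ, htu, rfl, rfl⟩ := h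
  exact ⟨hD _ hr, hD _ hr', D.comp C, t, u, σ, hσ, htu, (Ctx.fill_comp D C _).symm,
    (Ctx.fill_comp D C _).symm⟩

theorem reflTransGen_fill (D : Ctx A V) (hD : ∀ x, Closed x → Closed (D.fill x))
    (h : Relation.ReflTransGen (ClosedOneStep R) r r') :
    Relation.ReflTransGen (ClosedOneStep R) (D.fill r) (D.fill r') :=
  Relation.ReflTransGen.lift D.fill (fun _ _ h => h.fill D hD) _ _ h

theorem wifeq (hsound : ∀ p q : Tm A V, Closed p → Closed q → Deriv R p q → WIFeq p q)
    (h : ClosedOneStep R r r') : WIFeq r r' := by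
  obtain ⟨hr, hr', C, t, u, σ, -, htu, rfl, rfl⟩ := h
  exact hsound _ _ hr hr' (C.deriv_fill (deriv_subst_of_mem σ htu))

end ClosedOneStep

theorem Deriv.reflTransGen_closedOneStep {R : Tm A V → Tm A V → Prop} {ν : V → Tm A V}
    (hν : ClosedSub ν) {p q : Tm A V} (h : Deriv R p q) :
    Relation.ReflTransGen (ClosedOneStep R) (subst ν p) (subst ν q) := by
  induction h with
  | @ax t u h =>
      exact .single ⟨closed_subst hν t, closed_subst hν u, .hole, t, u, ν, hν, Or.inl h,
        rfl, rfl⟩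
  | @inst t u σ h =>
      refine .single ⟨closed_subst hν _, closed_subst hν _, .hole, t, u, _,
        fun x => closed_subst hν (σ x), Or.inl h, ?_, ?_⟩ <;> exact subst_subst ν σ _
  | refl => exact .refl
  | symm _ ih => exact Std.Symm.symm _ _ ih
  | trans _ _ ih₁ ih₂ => exact ih₁.trans ih₂
  | pre α _ ih => exact ClosedOneStep.reflTransGen_fill (.pre α .hole) (fun _ => id) ih
  | @plus t u t' u' _ _ ih₁ ih₂ =>
      exact (ClosedOneStep.reflTransGen_fill (.plusL .hole (subst ν u))
          (fun _ h => closed_plus_iff.2 ⟨h, closed_subst hν u⟩) ih₁).trans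
        (ClosedOneStep.reflTransGen_fill (.plusR (subst ν t') .hole)
          (fun _ h => closed_plus_iff.2 ⟨closed_subst hν t', h⟩) ih₂)

theorem tauResilient_of_closedOneStep {R : Tm A V → Tm A V → Prop} {r r' : Tm A V}
    (hm : 1 ≤ m) (hdepth : ∀ t u, R t u → wdepth t < m ∧ wdepth u < m)
    (hsound : ∀ p q : Tm A V, Closed p → Closed q → Deriv R p q → WIFeq p q)
    (hr : WIFle r (pTerm a m)) (hr' : WIFle r' (pTerm a m)) (h : ClosedOneStep R r r')
    (hres : TauResilient a m r) : TauResilient a m r' := by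
  have hrr' := h.wifeq hsound
  obtain ⟨hc, hc', C, t, u, σ, hσ, htu, rfl, rfl⟩ := h
  obtain ⟨x, hx, hres⟩ := hres
  rcases hx.eq_or_proper with ⟨-, rfl⟩ | hx
  · exact ⟨_, WTraceTo.refl _, hres.of_wifle hrr'.2⟩
  · have hd := htu.elim (hdepth _ _) fun h => (hdepth _ _ h).symm
    have hinst : ∀ ρ, ClosedSub ρ → WIFle (subst ρ t) (subst ρ u) := fun ρ hρ =>
      (hsound _ _ (closed_subst hρ t) (closed_subst hρ u) (deriv_subst_of_mem ρ htu)).1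
    refine (Ctx.properTauResilient_fill (fun hGt hGu =>
      ProperTauResilient.subst_of_wifle hm hd.1 hd.2 hσ hinst hGt hGu) (fun C hP hQ => ?_) C
      hc hc' (pShaped_of_wifle hr) (pShaped_of_wifle hr') ⟨x, hx, hres⟩).tauResilient
    exact (hsound _ _ hQ hP (C.deriv_fill (deriv_subst_of_mem σ htu).symm)).1

theorem tauResilient_of_reflTransGen {R : Tm A V → Tm A V → Prop} {r : Tm A V}
    (hm : 1 ≤ m) (hdepth : ∀ t u, R t u → wdepth t < m ∧ wdepth u < m)
    (hsound : ∀ p q : Tm A V, Closed p → Closed q → Deriv R p q → WIFeq p q)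
    (h : Relation.ReflTransGen (ClosedOneStep R) (pTerm a m) r) : TauResilient a m r := by
  suffices WIFeq r (pTerm a m) ∧ TauResilient a m r from this.2
  induction h with
  | refl => exact ⟨WIFeq.refl _, (properTauResilient_pTerm a m).tauResilient⟩
  | tail _ hstep ih =>
      have hr' := (hstep.wifeq hsound).symm.trans ih.1
      exact ⟨hr', tauResilient_of_closedOneStep hm hdepth hsound ih.1.1 hr'.1 hstep ih.2⟩

theorem exists_wdepth_lt_of_finite {E : Set (Tm A V × Tm A V)} (hE : E.Finite) :
    ∃ m, 1 ≤ m ∧ ∀ t u, (t, u) ∈ E → wdepth t < m ∧ wdepth u < m := by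
  obtain ⟨n, hn⟩ := (hE.image fun p => max (wdepth p.1) (wdepth p.2)).bddAbove
  refine ⟨n + 1, by omega, fun t u h => ?_⟩
  have := hn (Set.mem_image_of_mem _ h)
  simp only at this
  omega

end Tm

theorem stmt12_general {A V : Type} [Nonempty A] :
    ¬ ∃ E : Set (Tm A V × Tm A V), E.Finite ∧
      (∀ p q : Tm A V, Tm.Closed p → Tm.Closed q →
        Tm.Deriv (fun t u => (t, u) ∈ E) p q → Tm.WIFeq p q) ∧
      (∀ p q : Tm A V, Tm.Closed p → Tm.Closed q →
        Tm.WIFeq p q → Tm.Deriv (fun t u => (t, u) ∈ E) p q) := by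
  rintro ⟨E, hfin, hsound, hcompl⟩
  obtain ⟨m, hm, hdepth⟩ := Tm.exists_wdepth_lt_of_finite hfin
  obtain ⟨a⟩ := ‹Nonempty A›
  have hp : Tm.Closed (Tm.pTerm a m : Tm A V) := Tm.closed_pTerm a m
  have hq : Tm.Closed (Tm.qTerm a m : Tm A V) := Tm.closed_qTerm a m
  have hchain := (hcompl _ _ hp hq (Tm.wifeq_pTerm_qTerm a m)).reflTransGen_closedOneStep
    (ν := fun _ => Tm.nil) fun _ => Tm.closed_nil
  rw [Tm.subst_eq_self_of_closed _ hp, Tm.subst_eq_self_of_closed _ hq] at hchain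
  exact Tm.not_tauResilient_qTerm hm (Tm.tauResilient_of_reflTransGen hm hdepth hsound hchain)

/-- there is no finite axiomatization that is both sound and
ground-complete for BCCS(A) modulo weak impossible futures equivalence. -/
theorem stmt12 {A V : Type} [Nonempty A] [Countable V] [Infinite V] :
    ¬ ∃ E : Set (Tm A V × Tm A V), E.Finite ∧
      (∀ p q : Tm A V, Tm.Closed p → Tm.Closed q →
        Tm.Deriv (fun t u => (t, u) ∈ E) p q → Tm.WIFeq p q) ∧
      (∀ p q : Tm A V, Tm.Closed p → Tm.Closed q →
        Tm.WIFeq p q → Tm.Deriv (fun t u => (t, u) ∈ E) p q) :=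
  stmt12_general
end

section
/- Suppose E is an inequational axiomatization over a signature Σ such that for each inequation t ≼ u all of whose closed instances are derivable from E, there exist a map R from closed terms to open terms and a closed substitution ρ satisfying: (1) E ⊢ t ≼ R(ρ(t)) and E ⊢ R(ρ(u)) ≼ u; (2) E ⊢ R(σ(v)) ≼ R(σ(w)) for each axiom v ≼ w in E and each closed substitution σ; (3) for each n-ary function symbol f and closed terms p_i, q_i, the set E ∪ {p_i ≼ q_i, R(p_i) ≼ R(q_i) | i=1..n} proves R(f(p_1,…,p_n)) ≼ R(f(q_1,…,q_n)). Then E is ω-complete: whenever all closed instances of t ≼ u are derivable from E, so is t ≼ u itself. -/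
/-- A (single-sorted, first-order) signature. -/
structure Sig where
  F : Type
  ar : F → ℕ

/-- Terms over a signature `S` with variables `V`. -/
inductive GTm (S : Sig) (V : Type) : Type
  | var : V → GTm S V
  | app : (f : S.F) → (Fin (S.ar f) → GTm S V) → GTm S V

namespace GTm

variable {S : Sig} {V : Type}

/-- Substitution. -/
def subst (σ : V → GTm S V) : GTm S V → GTm S V
  | .var x => σ x
  | .app f ts => .app f (fun i => subst σ (ts i))

/-- The variables occurring in a term. -/
def vars : GTm S V → Set V
  | .var x => {x}
  | .app _ ts => ⋃ i, vars (ts i)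

/-- A term is closed if it contains no variables. -/
def Closed (t : GTm S V) : Prop := vars t = ∅

/-- A closed substitution. -/
def ClosedSub (σ : V → GTm S V) : Prop := ∀ x, Closed (σ x)

/-- Inequational derivability from a set of inequations `E`: reflexivity,
transitivity, substitution instances of axioms, and closure under
function-symbol contexts (no symmetry). -/
inductive IDeriv (E : Set (GTm S V × GTm S V)) : GTm S V → GTm S V → Prop
  | ax {t u : GTm S V} (σ : V → GTm S V) : (t, u) ∈ E → IDeriv E (subst σ t) (subst σ u)
  | refl (t : GTm S V) : IDeriv E t t
  | trans {t u v : GTm S V} : IDeriv E t u → IDeriv E u v → IDeriv E t v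
  | app (f : S.F) {ts us : Fin (S.ar f) → GTm S V} :
      (∀ i, IDeriv E (ts i) (us i)) → IDeriv E (.app f ts) (.app f us)

end GTm

namespace GTm

variable {S : Sig} {V : Type}

theorem subst_subst (σ τ : V → GTm S V) (t : GTm S V) :
    subst σ (subst τ t) = subst (fun x => subst σ (τ x)) t := by
  induction t with
  | var x => rfl
  | app f ts ih => simp only [subst]; exact congrArg _ (funext fun i => ih i)

theorem subst_closed {σ : V → GTm S V} (hσ : ClosedSub σ) (t : GTm S V) :
    Closed (subst σ t) := by
  induction t with
  | var x => exact hσ x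
  | app f ts ih =>
    simp only [Closed, subst, vars, Set.iUnion_eq_empty]
    exact fun i => ih i

theorem closed_subst {t : GTm S V} (ht : Closed t) (σ : V → GTm S V) :
    subst σ t = t := by
  induction t with
  | var x => exact absurd ht (by simp [Closed, vars])
  | app f ts ih =>
    simp only [Closed, vars, Set.iUnion_eq_empty] at ht
    simp only [subst]
    exact congrArg _ (funext fun i => ih i (ht i))

theorem IDeriv.subst_mono {E : Set (GTm S V × GTm S V)} {v w : GTm S V}
    (h : IDeriv E v w) (σ : V → GTm S V) : IDeriv E (subst σ v) (subst σ w) := by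
  induction h with
  | ax τ hmem =>
    rename_i a b
    rw [subst_subst, subst_subst]
    exact IDeriv.ax _ hmem
  | refl t => exact IDeriv.refl _
  | trans _ _ ih1 ih2 => exact ih1.trans ih2
  | app f _ ih => exact IDeriv.app f (fun i => ih i)

theorem IDeriv.cut {E E' : Set (GTm S V × GTm S V)} {v w : GTm S V}
    (h : IDeriv (E ∪ E') v w)
    (hE' : ∀ p ∈ E', ∀ σ : V → GTm S V, IDeriv E (subst σ p.1) (subst σ p.2)) :
    IDeriv E v w := by
  induction h with
  | ax τ hmem =>
    rcases hmem with hmem | hmem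
    · exact IDeriv.ax _ hmem
    · exact hE' _ hmem τ
  | refl t => exact IDeriv.refl _
  | trans _ _ ih1 ih2 => exact ih1.trans ih2
  | app f _ ih => exact IDeriv.app f (fun i => ih i)

end GTm

/-- the inverted substitutions technique, adapted to preorders.
If for each inequation `t ≼ u` all of whose closed instances are derivable from
`E` there are a map `R` (from closed terms to open terms) and a closed
substitution `ρ` satisfying conditions (1)-(3), then `E` is ω-complete. -/
theorem stmt15 {S : Sig} {V : Type} (E : Set (GTm S V × GTm S V))
    (h : ∀ t u : GTm S V,
      (∀ σ : V → GTm S V, GTm.ClosedSub σ →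
        GTm.IDeriv E (GTm.subst σ t) (GTm.subst σ u)) →
      ∃ (R : GTm S V → GTm S V) (ρ : V → GTm S V), GTm.ClosedSub ρ ∧
        -- (1)
        (GTm.IDeriv E t (R (GTm.subst ρ t)) ∧ GTm.IDeriv E (R (GTm.subst ρ u)) u) ∧
        -- (2)
        (∀ v w : GTm S V, (v, w) ∈ E → ∀ σ : V → GTm S V, GTm.ClosedSub σ →
          GTm.IDeriv E (R (GTm.subst σ v)) (R (GTm.subst σ w))) ∧
        -- (3)
        (∀ (f : S.F) (p q : Fin (S.ar f) → GTm S V),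
          (∀ i, GTm.Closed (p i)) → (∀ i, GTm.Closed (q i)) →
          GTm.IDeriv
            (E ∪ {pr | ∃ i, pr = (p i, q i) ∨ pr = (R (p i), R (q i))})
            (R (.app f p)) (R (.app f q)))) :
    ∀ t u : GTm S V,
      (∀ σ : V → GTm S V, GTm.ClosedSub σ →
        GTm.IDeriv E (GTm.subst σ t) (GTm.subst σ u)) →
      GTm.IDeriv E t u := by
  intro t u ht
  obtain ⟨R, ρ, hρ, ⟨h1a, h1b⟩, h2, h3⟩ := h t u ht
  -- Key lemma: for any derivation v ≼ w and closed substitution σ,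
  -- E ⊢ R(σ v) ≼ R(σ w).
  have key : ∀ {v w : GTm S V}, GTm.IDeriv E v w →
      ∀ σ : V → GTm S V, GTm.ClosedSub σ →
        GTm.IDeriv E (R (GTm.subst σ v)) (R (GTm.subst σ w)) := by
    intro v w hd
    induction hd with
    | ax τ hmem =>
      intro σ hσ
      rw [GTm.subst_subst, GTm.subst_subst]
      exact h2 _ _ hmem _ (fun x => GTm.subst_closed hσ (τ x))
    | refl t => intro σ hσ; exact GTm.IDeriv.refl _
    | trans _ _ ih1 ih2 => intro σ hσ; exact (ih1 σ hσ).trans (ih2 σ hσ)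
    | app f hd ih =>
      intro σ hσ
      rename_i ts us
      simp only [GTm.subst]
      set p : Fin (S.ar f) → GTm S V := fun i => GTm.subst σ (ts i) with hp
      set q : Fin (S.ar f) → GTm S V := fun i => GTm.subst σ (us i) with hq
      have hpc : ∀ i, GTm.Closed (p i) := fun i => GTm.subst_closed hσ _
      have hqc : ∀ i, GTm.Closed (q i) := fun i => GTm.subst_closed hσ _
      refine GTm.IDeriv.cut (h3 f p q hpc hqc) ?_
      rintro ⟨a, b⟩ hmem τ
      obtain ⟨i, hi | hi⟩ := hmem <;>
        simp only [Prod.mk.injEq] at hi <;> obtain ⟨rfl, rfl⟩ := hi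
      · rw [GTm.closed_subst (hpc i), GTm.closed_subst (hqc i)]
        exact ((hd i).subst_mono σ)
      · exact (ih i σ hσ).subst_mono τ
  have hρtu : GTm.IDeriv E (R (GTm.subst ρ t)) (R (GTm.subst ρ u)) := by
    have h' := key (ht ρ hρ) ρ hρ
    rwa [GTm.closed_subst (GTm.subst_closed hρ t),
      GTm.closed_subst (GTm.subst_closed hρ u)] at h'
  exact (h1a.trans hρtu).trans h1b
end
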